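/- arXiv:2306.17067 — 5 statements merged into one kernel-verified Lean document; each statement's English description precedes it below -/
import Mathlib

section
/- Let (X,Y), (X',Y'), (X'',Y'') be iid pairs of random vectors (X taking values in ℝ^N, Y in ℝ^M) with finite first moments, and assume all products of the form ‖X−X'‖‖Y−Y'‖, ‖X−X'‖‖Y−Y''‖, ‖X−X'‖‖X−X''‖, ‖Y−Y'‖‖Y−Y''‖, as well as ‖X−X'‖², ‖Y−Y'‖², are integrable. Then dCov²(X,Y) ≤ √(dCov²(X,X)) · √(dCov²(Y,Y)), where dCov²(X,X) and dCov²(Y,Y) are the squared distance variances of X and Y (which are nonnegative). Equivalently, dCov(X,Y) ≤ √(dVar(X)·dVar(Y)). -/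
/-!
Let `ν` be the law of `(X, Y)` and put `a(z, w) = ‖z.1 - w.1‖`, `b(z, w) = ‖z.2 - w.2‖` on
`ν ⊗ ν`. By independence and Fubini, `dCov²(X, Y)` equals
`∫ a b + (∫ a)(∫ b) - 2 ∫ ā b̄ dν`, where `ā z = ∫ a(z, w) dν(w)` is the row mean of `a`.
The doubly centred kernel `A(z, w) = a(z, w) - ā z - ā w + ∫ a` has vanishing row and column
means, so it is orthogonal in `L²(ν ⊗ ν)` to every function of one variable; expanding `∫ A B`
with this orthogonality gives exactly the expression above. Hence `dCov²(X, Y) = ⟪A, B⟫`,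
`dCov²(X, X) = ‖A‖²`, `dCov²(Y, Y) = ‖B‖²`, and the inequality is Cauchy–Schwarz.
-/

open MeasureTheory ProbabilityTheory

section CauchySchwarz

variable {α : Type*} [MeasurableSpace α] {μ : Measure α} {f g : α → ℝ}

theorem integral_mul_le_sqrt_mul_sqrt (hf : MemLp f 2 μ) (hg : MemLp g 2 μ) :
    ∫ x, f x * g x ∂μ ≤ √(∫ x, f x ^ 2 ∂μ) * √(∫ x, g x ^ 2 ∂μ) := by
  have holder := integral_mul_norm_le_Lp_mul_Lq (μ := μ) Real.HolderConjugate.two_two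
    (by simpa using hf) (by simpa using hg)
  simp only [Real.norm_eq_abs, Real.rpow_two, sq_abs, ← Real.sqrt_eq_rpow] at holder
  refine le_trans (integral_mono (hf.integrable_mul hg) (hf.abs.integrable_mul hg.abs)
    fun x => ?_) holder
  exact (le_abs_self _).trans (abs_mul _ _).le

theorem sq_integral_le_integral_sq [IsProbabilityMeasure μ] (hf : MemLp f 2 μ) :
    (∫ x, f x ∂μ) ^ 2 ≤ ∫ x, f x ^ 2 ∂μ := by
  simpa [variance_eq_sub hf, sub_nonneg] using variance_nonneg f μ

end CauchySchwarz

namespace DistCov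

section Kernel

variable {α : Type*} [MeasurableSpace α] {ρ : Measure α} {k a b : α × α → ℝ} {g : α → ℝ}

noncomputable def rowMean (ρ : Measure α) (k : α × α → ℝ) (z : α) : ℝ :=
  ∫ w, k (z, w) ∂ρ

noncomputable def doubleCenter (ρ : Measure α) (k : α × α → ℝ) (p : α × α) : ℝ :=
  k p - rowMean ρ k p.1 - rowMean ρ k p.2 + ∫ q, k q ∂(ρ.prod ρ)

/-- `dCov²` with the third independent copy replaced by row means, cf. `dCovSq_map_eq_of_iid`. -/
noncomputable def dCovSq (ρ : Measure α) (a b : α × α → ℝ) : ℝ :=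
  ∫ p, a p * b p ∂(ρ.prod ρ) + (∫ p, a p ∂(ρ.prod ρ)) * (∫ p, b p ∂(ρ.prod ρ))
    - 2 * ∫ z, rowMean ρ a z * rowMean ρ b z ∂ρ

theorem doubleCenter_swap (hk : ∀ p, k p.swap = k p) (p : α × α) :
    doubleCenter ρ k p.swap = doubleCenter ρ k p := by
  simp only [doubleCenter, hk, Prod.fst_swap, Prod.snd_swap]
  ring

section SFinite

variable [SFinite ρ]

theorem integral_rowMean (hk : Integrable k (ρ.prod ρ)) :
    ∫ z, rowMean ρ k z ∂ρ = ∫ p, k p ∂(ρ.prod ρ) :=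
  (integral_prod k hk).symm

theorem integral_mul_comp_fst (h : Integrable (fun p => k p * g p.1) (ρ.prod ρ)) :
    ∫ p, k p * g p.1 ∂(ρ.prod ρ) = ∫ z, rowMean ρ k z * g z ∂ρ := by
  rw [integral_prod _ h]
  exact integral_congr_ae (.of_forall fun z => integral_mul_const (g z) _)

theorem integral_mul_comp_snd (hk : ∀ p, k p.swap = k p)
    (h : Integrable (fun p => k p * g p.2) (ρ.prod ρ)) :
    ∫ p, k p * g p.2 ∂(ρ.prod ρ) = ∫ z, rowMean ρ k z * g z ∂ρ := by
  rw [← integral_prod_swap]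
  simp only [hk, Prod.snd_swap]
  exact integral_mul_comp_fst (by simpa [Function.comp_def, hk] using h.swap)

end SFinite

variable [IsProbabilityMeasure ρ]

theorem memLp_rowMean (hk : MemLp k 2 (ρ.prod ρ)) : MemLp (rowMean ρ k) 2 ρ := by
  have hmeas : AEStronglyMeasurable (rowMean ρ k) ρ := hk.1.integral_prod_right'
  refine (memLp_two_iff_integrable_sq hmeas).2 <|
    hk.integrable_sq.integral_prod_left.mono' (hmeas.pow 2) ?_
  filter_upwards [hk.integrable_sq.prod_right_ae, hk.1.prodMk_left] with z hz hmz
  rw [Real.norm_of_nonneg (sq_nonneg _)]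
  exact sq_integral_le_integral_sq <| (memLp_two_iff_integrable_sq hmz).2 hz

theorem memLp_doubleCenter (hk : MemLp k 2 (ρ.prod ρ)) :
    MemLp (doubleCenter ρ k) 2 (ρ.prod ρ) :=
  ((hk.sub ((memLp_rowMean hk).comp_fst ρ)).sub ((memLp_rowMean hk).comp_snd ρ)).add
    (memLp_const _)

theorem rowMean_doubleCenter_ae_eq_zero (hk : Integrable k (ρ.prod ρ)) :
    rowMean ρ (doubleCenter ρ k) =ᵐ[ρ] 0 := by
  have hrow : Integrable (rowMean ρ k) ρ := hk.integral_prod_left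
  filter_upwards [hk.prod_right_ae] with z hz
  change ∫ w, (k (z, w) - rowMean ρ k z - rowMean ρ k w + ∫ q, k q ∂(ρ.prod ρ)) ∂ρ = 0
  have hz' : Integrable (fun w => k (z, w) - rowMean ρ k z) ρ := hz.sub (integrable_const _)
  have hz'' : Integrable (fun w => k (z, w) - rowMean ρ k z - rowMean ρ k w) ρ := hz'.sub hrow
  rw [integral_add hz'' (integrable_const _), integral_sub hz' hrow,
    integral_sub hz (integrable_const _), integral_rowMean hk]
  simp [rowMean]

theorem integral_rowMean_doubleCenter_mul (hk : Integrable k (ρ.prod ρ)) :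
    ∫ z, rowMean ρ (doubleCenter ρ k) z * g z ∂ρ = 0 := by
  refine (integral_congr_ae ?_).trans (integral_zero _ _)
  filter_upwards [rowMean_doubleCenter_ae_eq_zero hk] with z hz
  simp [hz]

theorem integral_doubleCenter_mul_comp_fst (hk : MemLp k 2 (ρ.prod ρ)) (hg : MemLp g 2 ρ) :
    ∫ p, doubleCenter ρ k p * g p.1 ∂(ρ.prod ρ) = 0 := by
  rw [integral_mul_comp_fst ((memLp_doubleCenter hk).integrable_mul (hg.comp_fst ρ))]
  exact integral_rowMean_doubleCenter_mul (hk.integrable one_le_two)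

theorem integral_doubleCenter_mul_comp_snd (hk : MemLp k 2 (ρ.prod ρ))
    (hk_symm : ∀ p, k p.swap = k p) (hg : MemLp g 2 ρ) :
    ∫ p, doubleCenter ρ k p * g p.2 ∂(ρ.prod ρ) = 0 := by
  rw [integral_mul_comp_snd (doubleCenter_swap hk_symm)
    ((memLp_doubleCenter hk).integrable_mul (hg.comp_snd ρ))]
  exact integral_rowMean_doubleCenter_mul (hk.integrable one_le_two)

theorem integral_mul_doubleCenter (ha : MemLp a 2 (ρ.prod ρ)) (hb : MemLp b 2 (ρ.prod ρ))
    (ha_symm : ∀ p, a p.swap = a p) :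
    ∫ p, a p * doubleCenter ρ b p ∂(ρ.prod ρ) = dCovSq ρ a b := by
  have hfb := memLp_rowMean hb
  have h1 : Integrable (fun p => a p * b p) (ρ.prod ρ) := ha.integrable_mul hb
  have h2 : Integrable (fun p => a p * rowMean ρ b p.1) (ρ.prod ρ) :=
    ha.integrable_mul (hfb.comp_fst ρ)
  have h3 : Integrable (fun p => a p * rowMean ρ b p.2) (ρ.prod ρ) :=
    ha.integrable_mul (hfb.comp_snd ρ)
  have h4 : Integrable (fun p => a p * ∫ q, b q ∂(ρ.prod ρ)) (ρ.prod ρ) :=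
    (ha.integrable one_le_two).mul_const _
  simp only [doubleCenter, mul_add, mul_sub]
  simp (disch := fun_prop) only [integral_add, integral_sub]
  rw [integral_mul_comp_fst h2, integral_mul_comp_snd ha_symm h3, integral_mul_const, dCovSq]
  ring

theorem integral_doubleCenter_mul_doubleCenter (ha : MemLp a 2 (ρ.prod ρ))
    (hb : MemLp b 2 (ρ.prod ρ)) (ha_symm : ∀ p, a p.swap = a p)
    (hb_symm : ∀ p, b p.swap = b p) :
    ∫ p, doubleCenter ρ a p * doubleCenter ρ b p ∂(ρ.prod ρ) = dCovSq ρ a b := by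
  have hB := memLp_doubleCenter hb
  have hfa := memLp_rowMean ha
  have h1 : Integrable (fun p => doubleCenter ρ b p * a p) (ρ.prod ρ) := hB.integrable_mul ha
  have h2 : Integrable (fun p => doubleCenter ρ b p * rowMean ρ a p.1) (ρ.prod ρ) :=
    hB.integrable_mul (hfa.comp_fst ρ)
  have h3 : Integrable (fun p => doubleCenter ρ b p * rowMean ρ a p.2) (ρ.prod ρ) :=
    hB.integrable_mul (hfa.comp_snd ρ)
  have h4 : Integrable (fun p => doubleCenter ρ b p * ∫ q, a q ∂(ρ.prod ρ)) (ρ.prod ρ) :=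
    (hB.integrable one_le_two).mul_const _
  have hA : doubleCenter ρ a =
      fun p => a p - rowMean ρ a p.1 - rowMean ρ a p.2 + ∫ q, a q ∂(ρ.prod ρ) := rfl
  rw [hA]
  simp only [sub_mul, add_mul]
  simp only [mul_comm _ (doubleCenter ρ b _)]
  simp (disch := fun_prop) only [integral_add, integral_sub]
  rw [integral_doubleCenter_mul_comp_fst hb hfa, integral_doubleCenter_mul_comp_snd hb hb_symm hfa,
    integral_doubleCenter_mul_comp_fst hb (memLp_const _),
    ← integral_mul_doubleCenter ha hb ha_symm]
  simp only [mul_comm (doubleCenter ρ b _), sub_zero, add_zero]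

theorem dCovSq_le_sqrt_mul_sqrt (ha : MemLp a 2 (ρ.prod ρ)) (hb : MemLp b 2 (ρ.prod ρ))
    (ha_symm : ∀ p, a p.swap = a p) (hb_symm : ∀ p, b p.swap = b p) :
    dCovSq ρ a b ≤ √(dCovSq ρ a a) * √(dCovSq ρ b b) := by
  rw [← integral_doubleCenter_mul_doubleCenter ha hb ha_symm hb_symm,
    ← integral_doubleCenter_mul_doubleCenter ha ha ha_symm ha_symm,
    ← integral_doubleCenter_mul_doubleCenter hb hb hb_symm hb_symm]
  simpa only [sq] using
    integral_mul_le_sqrt_mul_sqrt (memLp_doubleCenter ha) (memLp_doubleCenter hb)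

end Kernel

section IID

variable {Ω β : Type*} [MeasurableSpace Ω] [MeasurableSpace β] {μ : Measure Ω}
  [IsFiniteMeasure μ] {Z Z' Z'' : Ω → β}

theorem map_prodMk_eq_prod_of_iid (hZ : Measurable Z) (hZ' : Measurable Z')
    (hind : IndepFun Z Z' μ) (hid : IdentDistrib Z Z' μ μ) :
    μ.map (fun ω => (Z ω, Z' ω)) = (μ.map Z).prod (μ.map Z) := by
  rw [(indepFun_iff_map_prod_eq_prod_map_map hZ.aemeasurable hZ'.aemeasurable).1 hind,
    ← hid.map_eq]

theorem integral_comp_prodMk_of_iid (hZ : Measurable Z) (hZ' : Measurable Z')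
    (hind : IndepFun Z Z' μ) (hid : IdentDistrib Z Z' μ μ) {g : β × β → ℝ}
    (hg : AEStronglyMeasurable g ((μ.map Z).prod (μ.map Z))) :
    ∫ ω, g (Z ω, Z' ω) ∂μ = ∫ p, g p ∂((μ.map Z).prod (μ.map Z)) := by
  rw [← map_prodMk_eq_prod_of_iid hZ hZ' hind hid] at hg ⊢
  exact (integral_map (hZ.prodMk hZ').aemeasurable hg).symm

theorem memLp_two_of_iid (hZ : Measurable Z) (hZ' : Measurable Z')
    (hind : IndepFun Z Z' μ) (hid : IdentDistrib Z Z' μ μ) {g : β × β → ℝ}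
    (hg : AEStronglyMeasurable g ((μ.map Z).prod (μ.map Z)))
    (hg_sq : Integrable (fun ω => g (Z ω, Z' ω) ^ 2) μ) :
    MemLp g 2 ((μ.map Z).prod (μ.map Z)) := by
  rw [← map_prodMk_eq_prod_of_iid hZ hZ' hind hid] at hg ⊢
  exact (memLp_map_measure_iff hg (hZ.prodMk hZ').aemeasurable).2 <|
    (memLp_two_iff_integrable_sq (hg.comp_aemeasurable (hZ.prodMk hZ').aemeasurable)).2 hg_sq

theorem map_prodMk_prodMk_eq_prod_of_iid (hZ : Measurable Z) (hZ' : Measurable Z')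
    (hZ'' : Measurable Z'') (hind : iIndepFun ![Z, Z', Z''] μ) (hid' : IdentDistrib Z Z' μ μ)
    (hid'' : IdentDistrib Z Z'' μ μ) :
    μ.map (fun ω => (Z ω, Z' ω, Z'' ω)) = (μ.map Z).prod ((μ.map Z).prod (μ.map Z)) := by
  have hmeas : ∀ i, Measurable (![Z, Z', Z''] i) := fun i => by fin_cases i <;> assumption
  have hZ_indep : IndepFun Z (fun ω => (Z' ω, Z'' ω)) μ :=
    (hind.indepFun_prodMk hmeas 1 2 0 (by decide) (by decide)).symm
  rw [(indepFun_iff_map_prod_eq_prod_map_map hZ.aemeasurable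
      (hZ'.prodMk hZ'').aemeasurable).1 hZ_indep,
    map_prodMk_eq_prod_of_iid hZ' hZ'' (hind.indepFun (by decide : (1 : Fin 3) ≠ 2))
      (hid'.symm.trans hid''), ← hid'.map_eq]

theorem integral_mul_comp_prodMk_of_iid (hZ : Measurable Z) (hZ' : Measurable Z')
    (hZ'' : Measurable Z'') (hind : iIndepFun ![Z, Z', Z''] μ) (hid' : IdentDistrib Z Z' μ μ)
    (hid'' : IdentDistrib Z Z'' μ μ) {g h : β × β → ℝ} (hg : Measurable g) (hh : Measurable h)
    (hgh : Integrable (fun ω => g (Z ω, Z' ω) * h (Z ω, Z'' ω)) μ) :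
    ∫ ω, g (Z ω, Z' ω) * h (Z ω, Z'' ω) ∂μ =
      ∫ z, rowMean (μ.map Z) g z * rowMean (μ.map Z) h z ∂(μ.map Z) := by
  have hmap := map_prodMk_prodMk_eq_prod_of_iid hZ hZ' hZ'' hind hid' hid''
  have hT : AEMeasurable (fun ω => (Z ω, Z' ω, Z'' ω)) μ :=
    (hZ.prodMk (hZ'.prodMk hZ'')).aemeasurable
  have hF : Measurable (fun q : β × β × β => g (q.1, q.2.1) * h (q.1, q.2.2)) := by fun_prop
  rw [← integral_map hT hF.aestronglyMeasurable, hmap, integral_prod]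
  · exact integral_congr_ae (.of_forall fun z =>
      integral_prod_mul (fun w => g (z, w)) (fun w => h (z, w)))
  · rw [← hmap]
    exact (integrable_map_measure hF.aestronglyMeasurable hT).2 hgh

theorem dCovSq_map_eq_of_iid (hZ : Measurable Z) (hZ' : Measurable Z') (hZ'' : Measurable Z'')
    (hind : iIndepFun ![Z, Z', Z''] μ) (hid' : IdentDistrib Z Z' μ μ)
    (hid'' : IdentDistrib Z Z'' μ μ) {g h : β × β → ℝ} (hg : Measurable g) (hh : Measurable h)
    (hgh : Integrable (fun ω => g (Z ω, Z' ω) * h (Z ω, Z'' ω)) μ)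
    (hhg : Integrable (fun ω => g (Z ω, Z'' ω) * h (Z ω, Z' ω)) μ) :
    dCovSq (μ.map Z) g h =
      ∫ ω, g (Z ω, Z' ω) * h (Z ω, Z' ω) ∂μ + (∫ ω, g (Z ω, Z' ω) ∂μ) * (∫ ω, h (Z ω, Z' ω) ∂μ)
        - ∫ ω, g (Z ω, Z' ω) * h (Z ω, Z'' ω) ∂μ - ∫ ω, g (Z ω, Z'' ω) * h (Z ω, Z' ω) ∂μ := by
  have hind' : IndepFun Z Z' μ := hind.indepFun (by decide : (0 : Fin 3) ≠ 1)
  have hswap : ∫ ω, g (Z ω, Z'' ω) * h (Z ω, Z' ω) ∂μ = ∫ ω, h (Z ω, Z' ω) * g (Z ω, Z'' ω) ∂μ :=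
    integral_congr_ae (.of_forall fun _ => mul_comm _ _)
  rw [hswap, integral_mul_comp_prodMk_of_iid hZ hZ' hZ'' hind hid' hid'' hg hh hgh,
    integral_mul_comp_prodMk_of_iid hZ hZ' hZ'' hind hid' hid'' hh hg
      (hhg.congr (.of_forall fun _ => mul_comm _ _)),
    integral_comp_prodMk_of_iid hZ hZ' hind' hid' (g := fun p => g p * h p)
      (hg.mul hh).aestronglyMeasurable,
    integral_comp_prodMk_of_iid hZ hZ' hind' hid' hg.aestronglyMeasurable,
    integral_comp_prodMk_of_iid hZ hZ' hind' hid' hh.aestronglyMeasurable]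
  simp only [dCovSq, mul_comm (rowMean _ h _)]
  ring

theorem dCovSq_map_self_eq_of_iid (hZ : Measurable Z) (hZ' : Measurable Z')
    (hZ'' : Measurable Z'') (hind : iIndepFun ![Z, Z', Z''] μ) (hid' : IdentDistrib Z Z' μ μ)
    (hid'' : IdentDistrib Z Z'' μ μ) {g : β × β → ℝ} (hg : Measurable g)
    (hgg : Integrable (fun ω => g (Z ω, Z' ω) * g (Z ω, Z'' ω)) μ) :
    dCovSq (μ.map Z) g g =
      ∫ ω, g (Z ω, Z' ω) ^ 2 ∂μ + (∫ ω, g (Z ω, Z' ω) ∂μ) ^ 2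
        - 2 * ∫ ω, g (Z ω, Z' ω) * g (Z ω, Z'' ω) ∂μ := by
  have hswap : ∫ ω, g (Z ω, Z'' ω) * g (Z ω, Z' ω) ∂μ = ∫ ω, g (Z ω, Z' ω) * g (Z ω, Z'' ω) ∂μ :=
    integral_congr_ae (.of_forall fun _ => mul_comm _ _)
  rw [dCovSq_map_eq_of_iid hZ hZ' hZ'' hind hid' hid'' hg hg hgg
    (hgg.congr (.of_forall fun _ => mul_comm _ _)), hswap]
  simp only [sq]
  ring

end IID

end DistCov

open DistCov

theorem dCov_sq_le_sqrt_dVar_sq_mul_sqrt_dVar_sq_general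
    {Ω : Type*} [MeasurableSpace Ω] (μ : Measure Ω) [IsProbabilityMeasure μ]
    (N M : ℕ)
    (X X' X'' : Ω → EuclideanSpace ℝ (Fin N))
    (Y Y' Y'' : Ω → EuclideanSpace ℝ (Fin M))
    (hXm : Measurable X) (hX'm : Measurable X') (hX''m : Measurable X'')
    (hYm : Measurable Y) (hY'm : Measurable Y') (hY''m : Measurable Y'')
    (hindep : iIndepFun
      ![fun ω => (X ω, Y ω), fun ω => (X' ω, Y' ω), fun ω => (X'' ω, Y'' ω)] μ)
    (hid1 : IdentDistrib (fun ω => (X ω, Y ω)) (fun ω => (X' ω, Y' ω)) μ μ)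
    (hid2 : IdentDistrib (fun ω => (X ω, Y ω)) (fun ω => (X'' ω, Y'' ω)) μ μ)
    (h2 : Integrable (fun ω => ‖X ω - X' ω‖ * ‖Y ω - Y'' ω‖) μ)
    (h3 : Integrable (fun ω => ‖X ω - X'' ω‖ * ‖Y ω - Y' ω‖) μ)
    (h4 : Integrable (fun ω => ‖X ω - X' ω‖ * ‖X ω - X'' ω‖) μ)
    (h5 : Integrable (fun ω => ‖Y ω - Y' ω‖ * ‖Y ω - Y'' ω‖) μ)
    (h6 : Integrable (fun ω => ‖X ω - X' ω‖ ^ 2) μ)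
    (h7 : Integrable (fun ω => ‖Y ω - Y' ω‖ ^ 2) μ) :
    (∫ ω, ‖X ω - X' ω‖ * ‖Y ω - Y' ω‖ ∂μ)
        + (∫ ω, ‖X ω - X' ω‖ ∂μ) * (∫ ω, ‖Y ω - Y' ω‖ ∂μ)
        - (∫ ω, ‖X ω - X' ω‖ * ‖Y ω - Y'' ω‖ ∂μ)
        - (∫ ω, ‖X ω - X'' ω‖ * ‖Y ω - Y' ω‖ ∂μ)
      ≤ Real.sqrt ((∫ ω, ‖X ω - X' ω‖ ^ 2 ∂μ)
            + (∫ ω, ‖X ω - X' ω‖ ∂μ) ^ 2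
            - 2 * ∫ ω, ‖X ω - X' ω‖ * ‖X ω - X'' ω‖ ∂μ)
        * Real.sqrt ((∫ ω, ‖Y ω - Y' ω‖ ^ 2 ∂μ)
            + (∫ ω, ‖Y ω - Y' ω‖ ∂μ) ^ 2
            - 2 * ∫ ω, ‖Y ω - Y' ω‖ * ‖Y ω - Y'' ω‖ ∂μ) := by
  have hZ : Measurable fun ω => (X ω, Y ω) := hXm.prodMk hYm
  have hZ' : Measurable fun ω => (X' ω, Y' ω) := hX'm.prodMk hY'm
  have hZ'' : Measurable fun ω => (X'' ω, Y'' ω) := hX''m.prodMk hY''m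
  have hind : IndepFun (fun ω => (X ω, Y ω)) (fun ω => (X' ω, Y' ω)) μ :=
    hindep.indepFun (by decide : (0 : Fin 3) ≠ 1)
  have := Measure.isProbabilityMeasure_map (μ := μ) hZ.aemeasurable
  set a : (EuclideanSpace ℝ (Fin N) × EuclideanSpace ℝ (Fin M)) ×
    (EuclideanSpace ℝ (Fin N) × EuclideanSpace ℝ (Fin M)) → ℝ := fun p => ‖p.1.1 - p.2.1‖
  set b : (EuclideanSpace ℝ (Fin N) × EuclideanSpace ℝ (Fin M)) ×
    (EuclideanSpace ℝ (Fin N) × EuclideanSpace ℝ (Fin M)) → ℝ := fun p => ‖p.1.2 - p.2.2‖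
  have ha : Measurable a := (measurable_fst.fst.sub measurable_snd.fst).norm
  have hb : Measurable b := (measurable_fst.snd.sub measurable_snd.snd).norm
  have key := dCovSq_le_sqrt_mul_sqrt
    (memLp_two_of_iid hZ hZ' hind hid1 ha.aestronglyMeasurable h6)
    (memLp_two_of_iid hZ hZ' hind hid1 hb.aestronglyMeasurable h7)
    (fun p => norm_sub_rev p.2.1 p.1.1) (fun p => norm_sub_rev p.2.2 p.1.2)
  rwa [dCovSq_map_eq_of_iid hZ hZ' hZ'' hindep hid1 hid2 ha hb h2 h3,
    dCovSq_map_self_eq_of_iid hZ hZ' hZ'' hindep hid1 hid2 ha h4,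
    dCovSq_map_self_eq_of_iid hZ hZ' hZ'' hindep hid1 hid2 hb h5] at key

/-- Cauchy–Schwarz-type inequality for distance covariance:
`dCov²(X,Y) ≤ √(dCov²(X,X)) · √(dCov²(Y,Y))` for iid pairs
`(X,Y)`, `(X',Y')`, `(X'',Y'')`, where
`dCov²(X,Y) = E[‖X−X'‖‖Y−Y'‖] + E[‖X−X'‖]E[‖Y−Y'‖] − E[‖X−X'‖‖Y−Y''‖] − E[‖X−X''‖‖Y−Y'‖]`,
`dCov²(X,X) = E[‖X−X'‖²] + (E[‖X−X'‖])² − 2E[‖X−X'‖‖X−X''‖]`, and similarly for `Y`. -/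
theorem dCov_sq_le_sqrt_dVar_sq_mul_sqrt_dVar_sq
    {Ω : Type*} [MeasurableSpace Ω] (μ : Measure Ω) [IsProbabilityMeasure μ]
    (N M : ℕ)
    (X X' X'' : Ω → EuclideanSpace ℝ (Fin N))
    (Y Y' Y'' : Ω → EuclideanSpace ℝ (Fin M))
    (hXm : Measurable X) (hX'm : Measurable X') (hX''m : Measurable X'')
    (hYm : Measurable Y) (hY'm : Measurable Y') (hY''m : Measurable Y'')
    (hindep : iIndepFun
      ![fun ω => (X ω, Y ω), fun ω => (X' ω, Y' ω), fun ω => (X'' ω, Y'' ω)] μ)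
    (hid1 : IdentDistrib (fun ω => (X ω, Y ω)) (fun ω => (X' ω, Y' ω)) μ μ)
    (hid2 : IdentDistrib (fun ω => (X ω, Y ω)) (fun ω => (X'' ω, Y'' ω)) μ μ)
    (hXi : Integrable X μ) (hX'i : Integrable X' μ) (hX''i : Integrable X'' μ)
    (hYi : Integrable Y μ) (hY'i : Integrable Y' μ) (hY''i : Integrable Y'' μ)
    (h1 : Integrable (fun ω => ‖X ω - X' ω‖ * ‖Y ω - Y' ω‖) μ)
    (h2 : Integrable (fun ω => ‖X ω - X' ω‖ * ‖Y ω - Y'' ω‖) μ)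
    (h3 : Integrable (fun ω => ‖X ω - X'' ω‖ * ‖Y ω - Y' ω‖) μ)
    (h4 : Integrable (fun ω => ‖X ω - X' ω‖ * ‖X ω - X'' ω‖) μ)
    (h5 : Integrable (fun ω => ‖Y ω - Y' ω‖ * ‖Y ω - Y'' ω‖) μ)
    (h6 : Integrable (fun ω => ‖X ω - X' ω‖ ^ 2) μ)
    (h7 : Integrable (fun ω => ‖Y ω - Y' ω‖ ^ 2) μ) :
    (∫ ω, ‖X ω - X' ω‖ * ‖Y ω - Y' ω‖ ∂μ)
        + (∫ ω, ‖X ω - X' ω‖ ∂μ) * (∫ ω, ‖Y ω - Y' ω‖ ∂μ)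
        - (∫ ω, ‖X ω - X' ω‖ * ‖Y ω - Y'' ω‖ ∂μ)
        - (∫ ω, ‖X ω - X'' ω‖ * ‖Y ω - Y' ω‖ ∂μ)
      ≤ Real.sqrt ((∫ ω, ‖X ω - X' ω‖ ^ 2 ∂μ)
            + (∫ ω, ‖X ω - X' ω‖ ∂μ) ^ 2
            - 2 * ∫ ω, ‖X ω - X' ω‖ * ‖X ω - X'' ω‖ ∂μ)
        * Real.sqrt ((∫ ω, ‖Y ω - Y' ω‖ ^ 2 ∂μ)
            + (∫ ω, ‖Y ω - Y' ω‖ ∂μ) ^ 2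
            - 2 * ∫ ω, ‖Y ω - Y' ω‖ * ‖Y ω - Y'' ω‖ ∂μ) :=
  dCov_sq_le_sqrt_dVar_sq_mul_sqrt_dVar_sq_general μ N M X X' X'' Y Y' Y'' hXm hX'm hX''m hYm hY'm
    hY''m hindep hid1 hid2 h2 h3 h4 h5 h6 h7
end

section
/- Let X, X', X'' be iid random vectors taking values in ℝ^N with finite first moments, and assume ‖X−X'‖² and ‖X−X'‖‖X−X''‖ are integrable. Then the covariance of ‖X−X'‖ and ‖X−X''‖ is nonnegative: cov(‖X−X'‖, ‖X−X''‖) ≥ 0. -/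
open MeasureTheory ProbabilityTheory
open scoped ENNReal

/-!
If `ρ` is the law of `X` and `ν` the common law of `X'` and `X''`, independence makes
`(X, X', X'')` distributed as `ρ ⊗ ν ⊗ ν`. With `G x = E‖x - X'‖`, Tonelli turns
`E[‖X - X'‖ ‖X - X''‖]` into `E[G(X)²]` and both `E‖X - X'‖` and `E‖X - X''‖`
into `E[G(X)]`, so the covariance is `Var G(X) ≥ 0`. For a nonnegative kernel this
goes through with lower Lebesgue integrals, where `(∫⁻ G)² ≤ ∫⁻ G²` is Cauchy–Schwarz
against the constant `1`.
-/

namespace MeasureTheory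

variable {α β : Type*} [MeasurableSpace α] [MeasurableSpace β]

theorem sq_lintegral_le_lintegral_sq (ρ : Measure α) [IsProbabilityMeasure ρ]
    {g : α → ℝ≥0∞} (hg : AEMeasurable g ρ) : (∫⁻ x, g x ∂ρ) ^ 2 ≤ ∫⁻ x, g x ^ 2 ∂ρ := by
  have hCS := ENNReal.lintegral_mul_le_Lp_mul_Lq ρ Real.HolderConjugate.two_two hg
    (aemeasurable_const (b := 1))
  simp only [Pi.mul_apply, mul_one, lintegral_const, measure_univ, ENNReal.rpow_two, one_pow,
    ENNReal.one_rpow] at hCS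
  calc (∫⁻ x, g x ∂ρ) ^ 2 ≤ ((∫⁻ x, g x ^ 2 ∂ρ) ^ (1 / 2 : ℝ)) ^ 2 := by gcongr
    _ = ∫⁻ x, g x ^ 2 ∂ρ := by
      rw [← ENNReal.rpow_natCast, ← ENNReal.rpow_mul]; norm_num

theorem lintegral_prod_prod_mul_eq_lintegral_sq (ρ : Measure α) (ν : Measure β) [SFinite ν]
    {f : α × β → ℝ≥0∞} (hf : Measurable f) :
    ∫⁻ p, f (p.1, p.2.1) * f (p.1, p.2.2) ∂ρ.prod (ν.prod ν) =
      ∫⁻ x, (∫⁻ y, f (x, y) ∂ν) ^ 2 ∂ρ := by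
  rw [lintegral_prod _ (by fun_prop)]
  refine lintegral_congr fun x => ?_
  rw [sq, ← lintegral_prod_mul (by fun_prop) (by fun_prop)]

theorem sq_lintegral_prod_le_lintegral_prod_prod_mul (ρ : Measure α) [IsProbabilityMeasure ρ]
    (ν : Measure β) [SFinite ν] {f : α × β → ℝ≥0∞} (hf : Measurable f) :
    (∫⁻ p, f p ∂ρ.prod ν) ^ 2 ≤ ∫⁻ p, f (p.1, p.2.1) * f (p.1, p.2.2) ∂ρ.prod (ν.prod ν) := by
  rw [lintegral_prod_prod_mul_eq_lintegral_sq ρ ν hf, lintegral_prod _ hf.aemeasurable]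
  exact sq_lintegral_le_lintegral_sq ρ hf.lintegral_prod_right'.aemeasurable

end MeasureTheory

namespace ProbabilityTheory

variable {Ω E : Type*} [MeasurableSpace Ω] {μ : Measure Ω} [IsProbabilityMeasure μ]
  [MeasurableSpace E] {X Y Z : Ω → E}

theorem iIndepFun.map_prodMk_prodMk_eq (h : iIndepFun ![X, Y, Z] μ)
    (hX : Measurable X) (hY : Measurable Y) (hZ : Measurable Z) :
    μ.map (fun ω => (X ω, Y ω, Z ω)) = (μ.map X).prod ((μ.map Y).prod (μ.map Z)) := by
  have hm : ∀ i, Measurable (![X, Y, Z] i) := by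
    intro i; fin_cases i <;> assumption
  have hX_YZ : X ⟂ᵢ[μ] fun ω => (Y ω, Z ω) := by
    simpa using (h.indepFun_prodMk hm 1 2 0 (by decide) (by decide)).symm
  have hYZ : Y ⟂ᵢ[μ] Z := by simpa using h.indepFun (i := 1) (j := 2) (by decide)
  rw [hX_YZ.map_prod_eq_prod_map_map hX.aemeasurable (hY.prodMk hZ).aemeasurable,
    hYZ.map_prod_eq_prod_map_map hY.aemeasurable hZ.aemeasurable]

theorem lintegral_mul_lintegral_le_lintegral_mul_of_iIndepFun (h : iIndepFun ![X, Y, Z] μ)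
    (hYZ : IdentDistrib Y Z μ μ) (hX : Measurable X) (hY : Measurable Y) (hZ : Measurable Z)
    {f : E × E → ℝ≥0∞} (hf : Measurable f) :
    (∫⁻ ω, f (X ω, Y ω) ∂μ) * ∫⁻ ω, f (X ω, Z ω) ∂μ
      ≤ ∫⁻ ω, f (X ω, Y ω) * f (X ω, Z ω) ∂μ := by
  have hXY : μ.map (fun ω => (X ω, Y ω)) = (μ.map X).prod (μ.map Y) :=
    (h.indepFun (i := 0) (j := 1) (by decide)).map_prod_eq_prod_map_map hX.aemeasurable
      hY.aemeasurable
  have hXZ : μ.map (fun ω => (X ω, Z ω)) = (μ.map X).prod (μ.map Y) := by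
    rw [hYZ.map_eq, (h.indepFun (i := 0) (j := 2) (by decide)).map_prod_eq_prod_map_map
      hX.aemeasurable hZ.aemeasurable]
  have hXYZ := h.map_prodMk_prodMk_eq hX hY hZ
  rw [← hYZ.map_eq] at hXYZ
  have hfXYZ : Measurable fun p : E × E × E => f (p.1, p.2.1) * f (p.1, p.2.2) := by fun_prop
  rw [← lintegral_map hf (hX.prodMk hY), ← lintegral_map hf (hX.prodMk hZ),
    ← lintegral_map hfXYZ (hX.prodMk (hY.prodMk hZ)), hXY, hXZ, hXYZ, ← sq]
  have := Measure.isProbabilityMeasure_map (μ := μ) hX.aemeasurable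
  exact sq_lintegral_prod_le_lintegral_prod_prod_mul _ _ hf

theorem integral_mul_integral_le_integral_mul_of_iIndepFun (h : iIndepFun ![X, Y, Z] μ)
    (hYZ : IdentDistrib Y Z μ μ) (hX : Measurable X) (hY : Measurable Y) (hZ : Measurable Z)
    {f : E × E → ℝ} (hf : Measurable f) (hf₀ : ∀ p, 0 ≤ f p)
    (hint : Integrable (fun ω => f (X ω, Y ω) * f (X ω, Z ω)) μ) :
    (∫ ω, f (X ω, Y ω) ∂μ) * ∫ ω, f (X ω, Z ω) ∂μ
      ≤ ∫ ω, f (X ω, Y ω) * f (X ω, Z ω) ∂μ := by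
  have hfXY : Measurable fun ω => f (X ω, Y ω) := hf.comp (hX.prodMk hY)
  have hfXZ : Measurable fun ω => f (X ω, Z ω) := hf.comp (hX.prodMk hZ)
  rw [integral_eq_lintegral_of_nonneg_ae (.of_forall fun _ => hf₀ _)
      hfXY.aestronglyMeasurable,
    integral_eq_lintegral_of_nonneg_ae (.of_forall fun _ => hf₀ _) hfXZ.aestronglyMeasurable,
    integral_eq_lintegral_of_nonneg_ae (.of_forall fun _ => mul_nonneg (hf₀ _) (hf₀ _))
      (hfXY.mul hfXZ).aestronglyMeasurable, ← ENNReal.toReal_mul]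
  refine ENNReal.toReal_mono hint.lintegral_lt_top.ne ?_
  simp only [ENNReal.ofReal_mul (hf₀ _)]
  exact lintegral_mul_lintegral_le_lintegral_mul_of_iIndepFun h hYZ hX hY hZ
    hf.ennreal_ofReal

end ProbabilityTheory

theorem cov_norm_sub_nonneg_general
    {Ω : Type*} [MeasurableSpace Ω] (μ : Measure Ω) [IsProbabilityMeasure μ]
    (N : ℕ)
    (X X' X'' : Ω → EuclideanSpace ℝ (Fin N))
    (hXm : Measurable X) (hX'm : Measurable X') (hX''m : Measurable X'')
    (hindep : iIndepFun ![X, X', X''] μ)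
    (hid1 : IdentDistrib X X' μ μ)
    (hid2 : IdentDistrib X X'' μ μ)
    (h2 : Integrable (fun ω => ‖X ω - X' ω‖ * ‖X ω - X'' ω‖) μ) :
    0 ≤ (∫ ω, ‖X ω - X' ω‖ * ‖X ω - X'' ω‖ ∂μ)
        - (∫ ω, ‖X ω - X' ω‖ ∂μ) * (∫ ω, ‖X ω - X'' ω‖ ∂μ) :=
  sub_nonneg.mpr <| integral_mul_integral_le_integral_mul_of_iIndepFun hindep
    (hid1.symm.trans hid2) hXm hX'm hX''m (f := fun p => ‖p.1 - p.2‖) (by fun_prop)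
    (fun _ => norm_nonneg _) h2

/-- For iid random vectors `X, X', X''` in `ℝ^N` with finite first moments,
`cov(‖X−X'‖, ‖X−X''‖) = E[‖X−X'‖‖X−X''‖] − E[‖X−X'‖]E[‖X−X''‖] ≥ 0`. -/
theorem cov_norm_sub_nonneg
    {Ω : Type*} [MeasurableSpace Ω] (μ : Measure Ω) [IsProbabilityMeasure μ]
    (N : ℕ)
    (X X' X'' : Ω → EuclideanSpace ℝ (Fin N))
    (hXm : Measurable X) (hX'm : Measurable X') (hX''m : Measurable X'')
    (hindep : iIndepFun ![X, X', X''] μ)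
    (hid1 : IdentDistrib X X' μ μ)
    (hid2 : IdentDistrib X X'' μ μ)
    (hXi : Integrable X μ) (hX'i : Integrable X' μ) (hX''i : Integrable X'' μ)
    (h1 : Integrable (fun ω => ‖X ω - X' ω‖ ^ 2) μ)
    (h2 : Integrable (fun ω => ‖X ω - X' ω‖ * ‖X ω - X'' ω‖) μ) :
    0 ≤ (∫ ω, ‖X ω - X' ω‖ * ‖X ω - X'' ω‖ ∂μ)
        - (∫ ω, ‖X ω - X' ω‖ ∂μ) * (∫ ω, ‖X ω - X'' ω‖ ∂μ) :=
  cov_norm_sub_nonneg_general μ N X X' X'' hXm hX'm hX''m hindep hid1 hid2 h2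
end

section
/- Main theorem: Let (X,Y), (X',Y'), (X'',Y'') be iid pairs of random vectors, with X taking values in [a,b]^N ⊆ ℝ^N and Y taking values in [c,d]^M ⊆ ℝ^M, for real numbers a ≤ b, c ≤ d and natural numbers N, M ≥ 1. Then dCov(X,Y) ≤ (1/2)·√((b−a)(d−c)·√(N·M)). Equivalently, dCov²(X,Y) ≤ (1/4)·(b−a)(d−c)·√(N·M). -/
/-!
Write `Z = (X, Y)` with law `ν`, `φ((x, y), (x', y')) = ‖x - x'‖` and
`ψ((x, y), (x', y')) = ‖y - y'‖`. By independence the four expectations depend only on `ν`, and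
they combine to `E[φ̃ ψ]` under `ν ⊗ ν`, where `φ̃` is the double centering of `φ`. The function
`φ̃` has mean zero and is orthogonal to every function of the form `u(z) + v(z')`; hence
`dCov² = Cov(φ̃, ψ)` and `Var φ̃ ≤ Var φ`. Cauchy–Schwarz and Popoviciu's inequality
`Var φ ≤ (diam X / 2)²` give `dCov² ≤ diam X · diam Y / 4`, and the box `[a, b]^N` has diameter
`(b - a) √N`.
-/

open MeasureTheory ProbabilityTheory

section CauchySchwarz

variable {Ω : Type*} [MeasurableSpace Ω] {μ : Measure Ω} [IsFiniteMeasure μ] {X Y : Ω → ℝ}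

lemma sq_covariance_le_variance_mul_variance (hX : MemLp X 2 μ) (hY : MemLp Y 2 μ) :
    cov[X, Y; μ] ^ 2 ≤ Var[X; μ] * Var[Y; μ] := by
  have hdisc : discrim Var[X; μ] (2 * cov[X, Y; μ]) Var[Y; μ] ≤ 0 := by
    refine discrim_le_zero fun t => ?_
    have h := variance_add (hX.const_smul t) hY
    rw [variance_smul, covariance_smul_left] at h
    nlinarith [variance_nonneg (t • X + Y) μ]
  rw [discrim] at hdisc
  nlinarith

end CauchySchwarz

section Bounded

variable {α : Type*} [MeasurableSpace α] {μ : Measure α} {h : α → ℝ} {C : ℝ}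

lemma integrable_of_abs_le [IsFiniteMeasure μ] (hh : Measurable h) (hC : ∀ x, |h x| ≤ C) :
    Integrable h μ :=
  .of_bound hh.aestronglyMeasurable C (ae_of_all _ fun x => (Real.norm_eq_abs _).trans_le (hC x))

lemma memLp_of_abs_le [IsFiniteMeasure μ] (hh : Measurable h) (hC : ∀ x, |h x| ≤ C)
    (p : ENNReal) : MemLp h p μ :=
  .of_bound hh.aestronglyMeasurable C (ae_of_all _ fun x => (Real.norm_eq_abs _).trans_le (hC x))

lemma abs_integral_le_of_abs_le [IsProbabilityMeasure μ] (hC : ∀ x, |h x| ≤ C) :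
    |∫ x, h x ∂μ| ≤ C := by
  simpa using norm_integral_le_of_norm_le_const (μ := μ)
    (ae_of_all _ fun x => (Real.norm_eq_abs _).trans_le (hC x))

end Bounded

section DoubleCentering

variable {S : Type*} [MeasurableSpace S]

noncomputable def marginalMean (ν : Measure S) (f : S × S → ℝ) (p : S) : ℝ :=
  ∫ q, f (p, q) ∂ν

noncomputable def doubleCentering (ν : Measure S) (f : S × S → ℝ) (z : S × S) : ℝ :=
  f z - marginalMean ν f z.1 - marginalMean ν f z.2 + ∫ w, f w ∂ν.prod ν

/-- For `f, g` the distances between the `X`- and the `Y`-components, this is `dCov²(X, Y)`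
expressed through the law `ν` of `(X, Y)`. -/
noncomputable def kernelDCovSq (ν : Measure S) (f g : S × S → ℝ) : ℝ :=
  ∫ z, f z * g z ∂ν.prod ν + (∫ z, f z ∂ν.prod ν) * (∫ z, g z ∂ν.prod ν)
    - 2 * ∫ p, marginalMean ν f p * marginalMean ν g p ∂ν

variable {ν : Measure S} {f g : S × S → ℝ} {C D : ℝ}

lemma doubleCentering_swap (hfs : ∀ z, f z.swap = f z) (z : S × S) :
    doubleCentering ν f z.swap = doubleCentering ν f z := by
  simp only [doubleCentering, hfs, Prod.fst_swap, Prod.snd_swap]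
  ring

variable [IsProbabilityMeasure ν]

lemma measurable_marginalMean (hf : Measurable f) : Measurable (marginalMean ν f) :=
  hf.stronglyMeasurable.integral_prod_right'.measurable

lemma abs_marginalMean_le (hfC : ∀ z, |f z| ≤ C) (p : S) : |marginalMean ν f p| ≤ C :=
  abs_integral_le_of_abs_le fun q => hfC (p, q)

lemma integrable_marginalMean (hf : Measurable f) (hfC : ∀ z, |f z| ≤ C) :
    Integrable (marginalMean ν f) ν :=
  integrable_of_abs_le (measurable_marginalMean hf) (abs_marginalMean_le hfC)

lemma integral_marginalMean (hf : Measurable f) (hfC : ∀ z, |f z| ≤ C) :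
    ∫ p, marginalMean ν f p ∂ν = ∫ z, f z ∂ν.prod ν :=
  (integral_prod f (integrable_of_abs_le hf hfC)).symm

lemma measurable_doubleCentering (hf : Measurable f) : Measurable (doubleCentering ν f) :=
  ((hf.sub ((measurable_marginalMean hf).comp measurable_fst)).sub
    ((measurable_marginalMean hf).comp measurable_snd)).add_const _

lemma abs_doubleCentering_le (hfC : ∀ z, |f z| ≤ C) (z : S × S) :
    |doubleCentering ν f z| ≤ 4 * C := by
  have h₁ := abs_le.1 (hfC z)
  have h₂ := abs_le.1 (abs_marginalMean_le (ν := ν) hfC z.1)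
  have h₃ := abs_le.1 (abs_marginalMean_le (ν := ν) hfC z.2)
  have h₄ := abs_le.1 (abs_integral_le_of_abs_le (μ := ν.prod ν) hfC)
  rw [doubleCentering, abs_le]
  constructor <;> linarith

lemma integral_doubleCentering_prodMk (hf : Measurable f) (hfC : ∀ z, |f z| ≤ C) (p : S) :
    ∫ q, doubleCentering ν f (p, q) ∂ν = 0 := by
  have hsec : Integrable (fun q => f (p, q)) ν :=
    integrable_of_abs_le (hf.comp measurable_prodMk_left) fun q => hfC (p, q)
  have hm := integrable_marginalMean (ν := ν) hf hfC
  simp only [doubleCentering]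
  rw [integral_add ((hsec.sub' (integrable_const _)).sub' hm) (integrable_const _),
    integral_sub (hsec.sub' (integrable_const _)) hm, integral_sub hsec (integrable_const _),
    integral_marginalMean hf hfC]
  simp [marginalMean]

lemma integral_doubleCentering (hf : Measurable f) (hfC : ∀ z, |f z| ≤ C) :
    ∫ z, doubleCentering ν f z ∂ν.prod ν = 0 := by
  rw [integral_prod _ (integrable_of_abs_le (measurable_doubleCentering hf)
    (abs_doubleCentering_le hfC))]
  simp [integral_doubleCentering_prodMk hf hfC]

lemma integral_doubleCentering_mul_fst (hf : Measurable f) (hfC : ∀ z, |f z| ≤ C)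
    {u : S → ℝ} (hu : Integrable u ν) :
    ∫ z, doubleCentering ν f z * u z.1 ∂ν.prod ν = 0 := by
  rw [integral_prod _ ((hu.comp_fst ν).bdd_mul
    (measurable_doubleCentering hf).aestronglyMeasurable
    (ae_of_all _ (abs_doubleCentering_le hfC)))]
  simp [integral_mul_const, integral_doubleCentering_prodMk hf hfC]

lemma integral_doubleCentering_mul_snd (hf : Measurable f) (hfs : ∀ z, f z.swap = f z)
    (hfC : ∀ z, |f z| ≤ C) {u : S → ℝ} (hu : Integrable u ν) :
    ∫ z, doubleCentering ν f z * u z.2 ∂ν.prod ν = 0 := by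
  rw [← integral_prod_swap]
  simpa only [doubleCentering_swap hfs, Prod.snd_swap] using
    integral_doubleCentering_mul_fst hf hfC hu

lemma integral_doubleCentering_mul_add (hf : Measurable f) (hfs : ∀ z, f z.swap = f z)
    (hfC : ∀ z, |f z| ≤ C) {u v : S → ℝ} (hu : Integrable u ν) (hv : Integrable v ν) :
    ∫ z, doubleCentering ν f z * (u z.1 + v z.2) ∂ν.prod ν = 0 := by
  have hdc := (measurable_doubleCentering (ν := ν) hf).aestronglyMeasurable (μ := ν.prod ν)
  have hbound := ae_of_all (ν.prod ν) (abs_doubleCentering_le (ν := ν) hfC)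
  simp_rw [mul_add]
  rw [integral_add ((hu.comp_fst ν).bdd_mul hdc hbound) ((hv.comp_snd ν).bdd_mul hdc hbound),
    integral_doubleCentering_mul_fst hf hfC hu, integral_doubleCentering_mul_snd hf hfs hfC hv,
    add_zero]

lemma variance_doubleCentering_le (hf : Measurable f) (hfs : ∀ z, f z.swap = f z)
    (hfC : ∀ z, |f z| ≤ C) :
    Var[doubleCentering ν f; ν.prod ν] ≤ Var[f; ν.prod ν] := by
  set r := f - doubleCentering ν f
  have hdc : MemLp (doubleCentering ν f) 2 (ν.prod ν) :=
    memLp_of_abs_le (measurable_doubleCentering hf) (abs_doubleCentering_le hfC) 2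
  have hr : MemLp r 2 (ν.prod ν) := (memLp_of_abs_le hf hfC 2).sub hdc
  have horth : cov[doubleCentering ν f, r; ν.prod ν] = 0 := by
    have hm : Integrable (marginalMean ν f) ν := integrable_marginalMean hf hfC
    have hr_eq : r = fun z => marginalMean ν f z.1
        + (marginalMean ν f z.2 - ∫ w, f w ∂ν.prod ν) := by
      ext z; simp only [r, Pi.sub_apply, doubleCentering]; ring
    rw [covariance_eq_sub hdc hr, integral_doubleCentering hf hfC, zero_mul, sub_zero, hr_eq]
    exact integral_doubleCentering_mul_add hf hfs hfC hm (hm.sub (integrable_const _))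
  calc Var[doubleCentering ν f; ν.prod ν]
      ≤ Var[doubleCentering ν f; ν.prod ν] + 2 * cov[doubleCentering ν f, r; ν.prod ν]
        + Var[r; ν.prod ν] := by rw [horth]; linarith [variance_nonneg r (ν.prod ν)]
    _ = Var[f; ν.prod ν] := by rw [← variance_add hdc hr, add_sub_cancel]

lemma integral_marginalMean_comp_fst_mul (hf : Measurable f) (hfC : ∀ z, |f z| ≤ C)
    (hg : Measurable g) (hgC : ∀ z, |g z| ≤ D) :
    ∫ z, marginalMean ν f z.1 * g z ∂ν.prod ν
      = ∫ p, marginalMean ν f p * marginalMean ν g p ∂ν := by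
  rw [integral_prod _ ?_]
  · simp only [integral_const_mul, marginalMean]
  · exact (integrable_of_abs_le hg hgC).bdd_mul
      ((measurable_marginalMean hf).comp measurable_fst).aestronglyMeasurable
      (ae_of_all _ fun z => abs_marginalMean_le hfC z.1)

lemma integral_doubleCentering_mul (hf : Measurable f) (hfC : ∀ z, |f z| ≤ C)
    (hg : Measurable g) (hgs : ∀ z, g z.swap = g z) (hgC : ∀ z, |g z| ≤ D) :
    ∫ z, doubleCentering ν f z * g z ∂ν.prod ν = kernelDCovSq ν f g := by
  have hg' : Integrable g (ν.prod ν) := integrable_of_abs_le hg hgC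
  have hmul {h : S × S → ℝ} {K : ℝ} (hh : Measurable h) (hK : ∀ z, |h z| ≤ K) :
      Integrable (fun z => h z * g z) (ν.prod ν) :=
    hg'.bdd_mul hh.aestronglyMeasurable (ae_of_all _ hK)
  have hm := measurable_marginalMean (ν := ν) hf
  have hmC := abs_marginalMean_le (ν := ν) hfC
  have i₁ := hmul hf hfC
  have i₂ : Integrable (fun z => marginalMean ν f z.1 * g z) (ν.prod ν) :=
    hmul (hm.comp measurable_fst) fun z => hmC z.1
  have i₃ : Integrable (fun z => marginalMean ν f z.2 * g z) (ν.prod ν) :=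
    hmul (hm.comp measurable_snd) fun z => hmC z.2
  have hswap : ∫ z, marginalMean ν f z.2 * g z ∂ν.prod ν
      = ∫ z, marginalMean ν f z.1 * g z ∂ν.prod ν := by
    rw [← integral_prod_swap]; simp only [Prod.snd_swap, hgs]
  simp only [doubleCentering, add_mul, sub_mul]
  rw [integral_add ((i₁.sub' i₂).sub' i₃) (hg'.const_mul _), integral_sub (i₁.sub' i₂) i₃,
    integral_sub i₁ i₂, integral_const_mul, hswap,
    integral_marginalMean_comp_fst_mul hf hfC hg hgC, kernelDCovSq]
  ring

theorem kernelDCovSq_le {a b c d : ℝ} (hf : Measurable f) (hg : Measurable g)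
    (hfs : ∀ z, f z.swap = f z) (hgs : ∀ z, g z.swap = g z)
    (hfab : ∀ z, f z ∈ Set.Icc a b) (hgcd : ∀ z, g z ∈ Set.Icc c d) :
    kernelDCovSq ν f g ≤ (b - a) / 2 * ((d - c) / 2) := by
  obtain ⟨p⟩ := nonempty_of_isProbabilityMeasure ν
  have hab : 0 ≤ (b - a) / 2 := by linarith [(hfab (p, p)).1, (hfab (p, p)).2]
  have hcd : 0 ≤ (d - c) / 2 := by linarith [(hgcd (p, p)).1, (hgcd (p, p)).2]
  have hfC z : |f z| ≤ max |a| |b| := abs_le_max_abs_abs (hfab z).1 (hfab z).2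
  have hgC z : |g z| ≤ max |c| |d| := abs_le_max_abs_abs (hgcd z).1 (hgcd z).2
  have hdc : MemLp (doubleCentering ν f) 2 (ν.prod ν) :=
    memLp_of_abs_le (measurable_doubleCentering hf) (abs_doubleCentering_le hfC) 2
  have hg₂ : MemLp g 2 (ν.prod ν) := memLp_of_abs_le hg hgC 2
  have hcov : kernelDCovSq ν f g = cov[doubleCentering ν f, g; ν.prod ν] := by
    rw [← integral_doubleCentering_mul hf hfC hg hgs hgC, covariance_eq_sub hdc hg₂,
      integral_doubleCentering hf hfC, zero_mul, sub_zero]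
    rfl
  have hvar_f := variance_le_sq_of_bounded (μ := ν.prod ν) (ae_of_all _ hfab) hf.aemeasurable
  have hvar_g := variance_le_sq_of_bounded (μ := ν.prod ν) (ae_of_all _ hgcd) hg.aemeasurable
  rw [hcov]
  refine le_of_sq_le_sq ?_ (mul_nonneg hab hcd)
  calc cov[doubleCentering ν f, g; ν.prod ν] ^ 2
      ≤ Var[doubleCentering ν f; ν.prod ν] * Var[g; ν.prod ν] :=
        sq_covariance_le_variance_mul_variance hdc hg₂
    _ ≤ ((b - a) / 2) ^ 2 * ((d - c) / 2) ^ 2 :=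
        mul_le_mul ((variance_doubleCentering_le hf hfs hfC).trans hvar_f) hvar_g
          (variance_nonneg _ _) (sq_nonneg _)
    _ = ((b - a) / 2 * ((d - c) / 2)) ^ 2 := by ring

end DoubleCentering

section IndependentCopies

variable {Ω S : Type*} [MeasurableSpace Ω] [MeasurableSpace S] {μ : Measure Ω}
  [IsProbabilityMeasure μ]

lemma integral_comp_prodMk_of_indepFun {T : Type*} [MeasurableSpace T] {Z : Ω → S}
    {W : Ω → T} (hZW : IndepFun Z W μ) (hZ : Measurable Z) (hW : Measurable W)
    {h : S × T → ℝ} (hh : Measurable h) :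
    ∫ ω, h (Z ω, W ω) ∂μ = ∫ z, h z ∂(μ.map Z).prod (μ.map W) := by
  rw [← (indepFun_iff_map_prod_eq_prod_map_map hZ.aemeasurable hW.aemeasurable).1 hZW,
    integral_map (hZ.prodMk hW).aemeasurable hh.aestronglyMeasurable]

variable {Z₀ Z₁ Z₂ : Ω → S} {f g : S × S → ℝ} {C D : ℝ}

lemma integral_mul_comp_of_iIndepFun (hind : iIndepFun ![Z₀, Z₁, Z₂] μ)
    (hid₁ : IdentDistrib Z₀ Z₁ μ μ) (hid₂ : IdentDistrib Z₀ Z₂ μ μ)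
    (h₀ : Measurable Z₀) (h₁ : Measurable Z₁) (h₂ : Measurable Z₂)
    (hf : Measurable f) (hfC : ∀ z, |f z| ≤ C) (hg : Measurable g) (hgC : ∀ z, |g z| ≤ D) :
    ∫ ω, f (Z₀ ω, Z₁ ω) * g (Z₀ ω, Z₂ ω) ∂μ
      = ∫ p, marginalMean (μ.map Z₀) f p * marginalMean (μ.map Z₀) g p ∂(μ.map Z₀) := by
  set ν := μ.map Z₀
  have hmeas : ∀ i, Measurable (![Z₀, Z₁, Z₂] i) := by
    intro i; fin_cases i <;> assumption
  have h₁₂ : μ.map (fun ω => (Z₁ ω, Z₂ ω)) = ν.prod ν := by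
    rw [(indepFun_iff_map_prod_eq_prod_map_map h₁.aemeasurable h₂.aemeasurable).1
      (hind.indepFun (by decide : (1 : Fin 3) ≠ 2)), ← hid₁.map_eq, ← hid₂.map_eq]
  have h₀₁₂ : IndepFun Z₀ (fun ω => (Z₁ ω, Z₂ ω)) μ :=
    (hind.indepFun_prodMk hmeas 1 2 0 (by decide) (by decide)).symm
  have hint : Integrable (fun z : S × S × S => f (z.1, z.2.1) * g (z.1, z.2.2))
      (ν.prod (ν.prod ν)) :=
    (integrable_of_abs_le (hg.comp (measurable_fst.prodMk measurable_snd.snd))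
      fun z => hgC _).bdd_mul
      (hf.comp (measurable_fst.prodMk measurable_snd.fst)).aestronglyMeasurable
      (ae_of_all _ fun z => hfC _)
  rw [integral_comp_prodMk_of_indepFun (h := fun z => f (z.1, z.2.1) * g (z.1, z.2.2)) h₀₁₂ h₀
    (h₁.prodMk h₂) (by fun_prop), h₁₂, integral_prod _ hint]
  exact integral_congr_ae (ae_of_all _ fun p =>
    integral_prod_mul (fun q => f (p, q)) (fun r => g (p, r)))

theorem dCovSq_eq_kernelDCovSq (hind : iIndepFun ![Z₀, Z₁, Z₂] μ)
    (hid₁ : IdentDistrib Z₀ Z₁ μ μ) (hid₂ : IdentDistrib Z₀ Z₂ μ μ)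
    (h₀ : Measurable Z₀) (h₁ : Measurable Z₁) (h₂ : Measurable Z₂)
    (hf : Measurable f) (hfC : ∀ z, |f z| ≤ C) (hg : Measurable g) (hgC : ∀ z, |g z| ≤ D) :
    (∫ ω, f (Z₀ ω, Z₁ ω) * g (Z₀ ω, Z₁ ω) ∂μ)
        + (∫ ω, f (Z₀ ω, Z₁ ω) ∂μ) * (∫ ω, g (Z₀ ω, Z₁ ω) ∂μ)
        - (∫ ω, f (Z₀ ω, Z₁ ω) * g (Z₀ ω, Z₂ ω) ∂μ)
        - (∫ ω, f (Z₀ ω, Z₂ ω) * g (Z₀ ω, Z₁ ω) ∂μ)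
      = kernelDCovSq (μ.map Z₀) f g := by
  have hpair {h : S × S → ℝ} (hh : Measurable h) :
      ∫ ω, h (Z₀ ω, Z₁ ω) ∂μ = ∫ z, h z ∂(μ.map Z₀).prod (μ.map Z₀) := by
    have h₀₁ : IndepFun Z₀ Z₁ μ := hind.indepFun (by decide : (0 : Fin 3) ≠ 1)
    rw [integral_comp_prodMk_of_indepFun h₀₁ h₀ h₁ hh, hid₁.map_eq]
  have h₂₁ : ∫ ω, f (Z₀ ω, Z₂ ω) * g (Z₀ ω, Z₁ ω) ∂μ
      = ∫ p, marginalMean (μ.map Z₀) f p * marginalMean (μ.map Z₀) g p ∂(μ.map Z₀) := by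
    simp_rw [mul_comm (f _), mul_comm (marginalMean _ f _)]
    exact integral_mul_comp_of_iIndepFun hind hid₁ hid₂ h₀ h₁ h₂ hg hgC hf hfC
  rw [h₂₁, hpair (h := fun z => f z * g z) (hf.mul hg), hpair hf, hpair hg,
    integral_mul_comp_of_iIndepFun hind hid₁ hid₂ h₀ h₁ h₂ hf hfC hg hgC, kernelDCovSq]
  ring

end IndependentCopies

theorem dCovSq_le_of_norm_sub_le {Ω E F : Type*} [MeasurableSpace Ω] {μ : Measure Ω}
    [IsProbabilityMeasure μ]
    [NormedAddCommGroup E] [MeasurableSpace E] [BorelSpace E] [SecondCountableTopology E]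
    [NormedAddCommGroup F] [MeasurableSpace F] [BorelSpace F] [SecondCountableTopology F]
    {X X' X'' : Ω → E} {Y Y' Y'' : Ω → F}
    (hXm : Measurable X) (hX'm : Measurable X') (hX''m : Measurable X'')
    (hYm : Measurable Y) (hY'm : Measurable Y') (hY''m : Measurable Y'')
    (hindep : iIndepFun
      ![fun ω => (X ω, Y ω), fun ω => (X' ω, Y' ω), fun ω => (X'' ω, Y'' ω)] μ)
    (hid1 : IdentDistrib (fun ω => (X ω, Y ω)) (fun ω => (X' ω, Y' ω)) μ μ)
    (hid2 : IdentDistrib (fun ω => (X ω, Y ω)) (fun ω => (X'' ω, Y'' ω)) μ μ) {A B : ℝ}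
    (hX' : ∀ᵐ ω ∂μ, ‖X ω - X' ω‖ ≤ A) (hX'' : ∀ᵐ ω ∂μ, ‖X ω - X'' ω‖ ≤ A)
    (hY' : ∀ᵐ ω ∂μ, ‖Y ω - Y' ω‖ ≤ B) (hY'' : ∀ᵐ ω ∂μ, ‖Y ω - Y'' ω‖ ≤ B) :
    (∫ ω, ‖X ω - X' ω‖ * ‖Y ω - Y' ω‖ ∂μ)
        + (∫ ω, ‖X ω - X' ω‖ ∂μ) * (∫ ω, ‖Y ω - Y' ω‖ ∂μ)
        - (∫ ω, ‖X ω - X' ω‖ * ‖Y ω - Y'' ω‖ ∂μ)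
        - (∫ ω, ‖X ω - X'' ω‖ * ‖Y ω - Y' ω‖ ∂μ)
      ≤ A / 2 * (B / 2) := by
  obtain ⟨_, hA⟩ := hX'.exists
  obtain ⟨_, hB⟩ := hY'.exists
  -- Truncating the distances at `A` and `B` changes them only on a null set and makes the
  -- kernels bounded.
  set φ : (E × F) × (E × F) → ℝ := fun z => min ‖z.1.1 - z.2.1‖ A
  set ψ : (E × F) × (E × F) → ℝ := fun z => min ‖z.1.2 - z.2.2‖ B
  have hφ : Measurable φ := by fun_prop
  have hψ : Measurable ψ := by fun_prop
  have hφA z : φ z ∈ Set.Icc 0 A :=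
    ⟨le_min (norm_nonneg _) ((norm_nonneg _).trans hA), min_le_right _ _⟩
  have hψB z : ψ z ∈ Set.Icc 0 B :=
    ⟨le_min (norm_nonneg _) ((norm_nonneg _).trans hB), min_le_right _ _⟩
  have hφC z : |φ z| ≤ A := (abs_of_nonneg (hφA z).1).trans_le (hφA z).2
  have hψC z : |ψ z| ≤ B := (abs_of_nonneg (hψB z).1).trans_le (hψB z).2
  have e₁ : (fun ω => ‖X ω - X' ω‖) =ᵐ[μ] fun ω => φ ((X ω, Y ω), (X' ω, Y' ω)) :=
    hX'.mono fun ω h => (min_eq_left h).symm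
  have e₂ : (fun ω => ‖X ω - X'' ω‖) =ᵐ[μ] fun ω => φ ((X ω, Y ω), (X'' ω, Y'' ω)) :=
    hX''.mono fun ω h => (min_eq_left h).symm
  have e₃ : (fun ω => ‖Y ω - Y' ω‖) =ᵐ[μ] fun ω => ψ ((X ω, Y ω), (X' ω, Y' ω)) :=
    hY'.mono fun ω h => (min_eq_left h).symm
  have e₄ : (fun ω => ‖Y ω - Y'' ω‖) =ᵐ[μ] fun ω => ψ ((X ω, Y ω), (X'' ω, Y'' ω)) :=
    hY''.mono fun ω h => (min_eq_left h).symm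
  rw [integral_congr_ae (e₁.fun_mul e₃), integral_congr_ae e₁, integral_congr_ae e₃,
    integral_congr_ae (e₁.fun_mul e₄), integral_congr_ae (e₂.fun_mul e₃)]
  have := Measure.isProbabilityMeasure_map (μ := μ) (hXm.prodMk hYm).aemeasurable
  calc _ = kernelDCovSq (μ.map fun ω => (X ω, Y ω)) φ ψ :=
        dCovSq_eq_kernelDCovSq hindep hid1 hid2 (hXm.prodMk hYm) (hX'm.prodMk hY'm)
          (hX''m.prodMk hY''m) hφ hφC hψ hψC
    _ ≤ (A - 0) / 2 * ((B - 0) / 2) :=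
        kernelDCovSq_le hφ hψ
          (fun z => by simp only [φ, Prod.fst_swap, Prod.snd_swap, norm_sub_rev])
          (fun z => by simp only [ψ, Prod.fst_swap, Prod.snd_swap, norm_sub_rev]) hφA hψB
    _ = A / 2 * (B / 2) := by rw [sub_zero, sub_zero]

lemma EuclideanSpace.norm_sub_le_of_mem_Icc {ι : Type*} [Fintype ι] {a b : ℝ} (hab : a ≤ b)
    {x y : EuclideanSpace ℝ ι} (hx : ∀ i, x i ∈ Set.Icc a b) (hy : ∀ i, y i ∈ Set.Icc a b) :
    ‖x - y‖ ≤ (b - a) * √(Fintype.card ι) := by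
  rw [← dist_eq_norm, EuclideanSpace.dist_eq]
  calc √(∑ i, dist (x i) (y i) ^ 2) ≤ √(∑ _i : ι, (b - a) ^ 2) :=
        Real.sqrt_le_sqrt (Finset.sum_le_sum fun i _ =>
          pow_le_pow_left₀ dist_nonneg (Real.dist_le_of_mem_Icc (hx i) (hy i)) 2)
    _ = (b - a) * √(Fintype.card ι) := by
        rw [Finset.sum_const, Finset.card_univ, nsmul_eq_mul, Real.sqrt_mul (Nat.cast_nonneg _),
          Real.sqrt_sq (sub_nonneg.2 hab), mul_comm]

theorem dCov_le_of_bounded_general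
    {Ω : Type*} [MeasurableSpace Ω] (μ : Measure Ω) [IsProbabilityMeasure μ]
    (a b c d : ℝ) (hab : a ≤ b) (hcd : c ≤ d)
    (N M : ℕ)
    (X X' X'' : Ω → EuclideanSpace ℝ (Fin N))
    (Y Y' Y'' : Ω → EuclideanSpace ℝ (Fin M))
    (hXm : Measurable X) (hX'm : Measurable X') (hX''m : Measurable X'')
    (hYm : Measurable Y) (hY'm : Measurable Y') (hY''m : Measurable Y'')
    (hindep : iIndepFun
      ![fun ω => (X ω, Y ω), fun ω => (X' ω, Y' ω), fun ω => (X'' ω, Y'' ω)] μ)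
    (hid1 : IdentDistrib (fun ω => (X ω, Y ω)) (fun ω => (X' ω, Y' ω)) μ μ)
    (hid2 : IdentDistrib (fun ω => (X ω, Y ω)) (fun ω => (X'' ω, Y'' ω)) μ μ)
    (hXab : ∀ᵐ ω ∂μ, ∀ i, X ω i ∈ Set.Icc a b)
    (hX'ab : ∀ᵐ ω ∂μ, ∀ i, X' ω i ∈ Set.Icc a b)
    (hX''ab : ∀ᵐ ω ∂μ, ∀ i, X'' ω i ∈ Set.Icc a b)
    (hYcd : ∀ᵐ ω ∂μ, ∀ i, Y ω i ∈ Set.Icc c d)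
    (hY'cd : ∀ᵐ ω ∂μ, ∀ i, Y' ω i ∈ Set.Icc c d)
    (hY''cd : ∀ᵐ ω ∂μ, ∀ i, Y'' ω i ∈ Set.Icc c d) :
    Real.sqrt ((∫ ω, ‖X ω - X' ω‖ * ‖Y ω - Y' ω‖ ∂μ)
          + (∫ ω, ‖X ω - X' ω‖ ∂μ) * (∫ ω, ‖Y ω - Y' ω‖ ∂μ)
          - (∫ ω, ‖X ω - X' ω‖ * ‖Y ω - Y'' ω‖ ∂μ)
          - (∫ ω, ‖X ω - X'' ω‖ * ‖Y ω - Y' ω‖ ∂μ))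
        ≤ (1 / 2) * Real.sqrt ((b - a) * (d - c) * Real.sqrt ((N : ℝ) * M))
      ∧ (∫ ω, ‖X ω - X' ω‖ * ‖Y ω - Y' ω‖ ∂μ)
          + (∫ ω, ‖X ω - X' ω‖ ∂μ) * (∫ ω, ‖Y ω - Y' ω‖ ∂μ)
          - (∫ ω, ‖X ω - X' ω‖ * ‖Y ω - Y'' ω‖ ∂μ)
          - (∫ ω, ‖X ω - X'' ω‖ * ‖Y ω - Y' ω‖ ∂μ)
        ≤ (1 / 4) * ((b - a) * (d - c)) * Real.sqrt ((N : ℝ) * M) := by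
  have hdiam {n : ℕ} {lo hi : ℝ} (hlh : lo ≤ hi) {U V : Ω → EuclideanSpace ℝ (Fin n)}
      (hU : ∀ᵐ ω ∂μ, ∀ i, U ω i ∈ Set.Icc lo hi) (hV : ∀ᵐ ω ∂μ, ∀ i, V ω i ∈ Set.Icc lo hi) :
      ∀ᵐ ω ∂μ, ‖U ω - V ω‖ ≤ (hi - lo) * √n := by
    filter_upwards [hU, hV] with ω hu hv
    simpa using EuclideanSpace.norm_sub_le_of_mem_Icc hlh hu hv
  have hsq := (dCovSq_le_of_norm_sub_le hXm hX'm hX''m hYm hY'm hY''m hindep hid1 hid2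
    (hdiam hab hXab hX'ab) (hdiam hab hXab hX''ab) (hdiam hcd hYcd hY'cd)
    (hdiam hcd hYcd hY''cd)).trans_eq
    (show _ = 1 / 4 * ((b - a) * (d - c)) * √((N : ℝ) * M) by
      rw [Real.sqrt_mul (Nat.cast_nonneg N)]; ring)
  refine ⟨(Real.sqrt_le_sqrt hsq).trans_eq ?_, hsq⟩
  rw [show 1 / 4 * ((b - a) * (d - c)) * √(N * M : ℝ)
      = (1 / 2) ^ 2 * ((b - a) * (d - c) * √(N * M : ℝ)) by ring,
    Real.sqrt_mul (by positivity), Real.sqrt_sq (by norm_num)]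

/-- Main theorem: for iid pairs `(X,Y)`, `(X',Y')`, `(X'',Y'')` with `X` taking values in
`[a,b]^N` and `Y` in `[c,d]^M`, the distance covariance satisfies
`dCov(X,Y) ≤ (1/2)·√((b−a)(d−c)·√(N·M))`; equivalently,
`dCov²(X,Y) ≤ (1/4)·(b−a)(d−c)·√(N·M)`, where
`dCov²(X,Y) = E[‖X−X'‖‖Y−Y'‖] + E[‖X−X'‖]E[‖Y−Y'‖] − E[‖X−X'‖‖Y−Y''‖] − E[‖X−X''‖‖Y−Y'‖]`
and `dCov(X,Y)` is its nonnegative square root. -/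
theorem dCov_le_of_bounded
    {Ω : Type*} [MeasurableSpace Ω] (μ : Measure Ω) [IsProbabilityMeasure μ]
    (a b c d : ℝ) (hab : a ≤ b) (hcd : c ≤ d)
    (N M : ℕ) (hN : 1 ≤ N) (hM : 1 ≤ M)
    (X X' X'' : Ω → EuclideanSpace ℝ (Fin N))
    (Y Y' Y'' : Ω → EuclideanSpace ℝ (Fin M))
    (hXm : Measurable X) (hX'm : Measurable X') (hX''m : Measurable X'')
    (hYm : Measurable Y) (hY'm : Measurable Y') (hY''m : Measurable Y'')
    (hindep : iIndepFun
      ![fun ω => (X ω, Y ω), fun ω => (X' ω, Y' ω), fun ω => (X'' ω, Y'' ω)] μ)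
    (hid1 : IdentDistrib (fun ω => (X ω, Y ω)) (fun ω => (X' ω, Y' ω)) μ μ)
    (hid2 : IdentDistrib (fun ω => (X ω, Y ω)) (fun ω => (X'' ω, Y'' ω)) μ μ)
    (hXab : ∀ᵐ ω ∂μ, ∀ i, X ω i ∈ Set.Icc a b)
    (hX'ab : ∀ᵐ ω ∂μ, ∀ i, X' ω i ∈ Set.Icc a b)
    (hX''ab : ∀ᵐ ω ∂μ, ∀ i, X'' ω i ∈ Set.Icc a b)
    (hYcd : ∀ᵐ ω ∂μ, ∀ i, Y ω i ∈ Set.Icc c d)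
    (hY'cd : ∀ᵐ ω ∂μ, ∀ i, Y' ω i ∈ Set.Icc c d)
    (hY''cd : ∀ᵐ ω ∂μ, ∀ i, Y'' ω i ∈ Set.Icc c d) :
    Real.sqrt ((∫ ω, ‖X ω - X' ω‖ * ‖Y ω - Y' ω‖ ∂μ)
          + (∫ ω, ‖X ω - X' ω‖ ∂μ) * (∫ ω, ‖Y ω - Y' ω‖ ∂μ)
          - (∫ ω, ‖X ω - X' ω‖ * ‖Y ω - Y'' ω‖ ∂μ)
          - (∫ ω, ‖X ω - X'' ω‖ * ‖Y ω - Y' ω‖ ∂μ))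
        ≤ (1 / 2) * Real.sqrt ((b - a) * (d - c) * Real.sqrt ((N : ℝ) * M))
      ∧ (∫ ω, ‖X ω - X' ω‖ * ‖Y ω - Y' ω‖ ∂μ)
          + (∫ ω, ‖X ω - X' ω‖ ∂μ) * (∫ ω, ‖Y ω - Y' ω‖ ∂μ)
          - (∫ ω, ‖X ω - X' ω‖ * ‖Y ω - Y'' ω‖ ∂μ)
          - (∫ ω, ‖X ω - X'' ω‖ * ‖Y ω - Y' ω‖ ∂μ)
        ≤ (1 / 4) * ((b - a) * (d - c)) * Real.sqrt ((N : ℝ) * M) :=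
  dCov_le_of_bounded_general μ a b c d hab hcd N M X X' X'' Y Y' Y'' hXm hX'm hX''m hYm hY'm hY''m
    hindep hid1 hid2 hXab hX'ab hX''ab hYcd hY'cd hY''cd
end

section
/- Corollary: Let (X,Y), (X',Y'), (X'',Y'') be iid pairs of random vectors, with X taking values in [a,a+1]^N ⊆ ℝ^N and Y taking values in [c,c+1]^N ⊆ ℝ^N, for real numbers a, c and a natural number N ≥ 1. Then dCov(X,Y) ≤ √N/2. Equivalently, dCov²(X,Y) ≤ N/4. -/
/-!
Let `ρ` be the joint law of `(X, Y)` and truncate the distances at the diameter `D = √N` of the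
cube, which almost surely changes nothing: `f(p, q) = min ‖p.1 - q.1‖ D` and
`g(p, q) = min ‖p.2 - q.2‖ D` are symmetric kernels with values in `[0, D]`. Independence turns
`dCov²(X, Y)` into `∫∫ F G d(ρ ⊗ ρ)`, where `F`, `G` are the double centerings of `f`, `g`.
By AM–GM this is at most `(∫∫ F² + ∫∫ G²) / 2`, and by the law of total variance
`∫∫ F² = E[Var(f(Z, Z') | Z)] - Var(E[f(Z, Z') | Z])` for independent `Z, Z' ~ ρ`, which
Popoviciu's inequality bounds by `(D / 2)²`.
-/

open MeasureTheory ProbabilityTheory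
open Function
open scoped ENNReal

namespace DistanceCovariance

variable {W : Type*} [MeasurableSpace W]

noncomputable def rowMean (ρ : Measure W) (f : W → W → ℝ) (p : W) : ℝ := ∫ q, f p q ∂ρ

noncomputable def doubleCentered (ρ : Measure W) (f : W → W → ℝ) (z : W × W) : ℝ :=
  f z.1 z.2 - rowMean ρ f z.1 - rowMean ρ f z.2 + ∫ p, rowMean ρ f p ∂ρ

section BoundedKernel

variable {ρ : Measure W} {f g : W → W → ℝ} {C : ℝ}

lemma memLp_top_uncurry (hf : Measurable (uncurry f)) (hfC : ∀ p q, |f p q| ≤ C) :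
    MemLp (uncurry f) ∞ (ρ.prod ρ) :=
  memLp_top_of_bound hf.aestronglyMeasurable C (ae_of_all _ fun z => hfC z.1 z.2)

lemma memLp_top_apply (hf : Measurable (uncurry f)) (hfC : ∀ p q, |f p q| ≤ C) (p : W) :
    MemLp (f p) ∞ ρ :=
  memLp_top_of_bound hf.of_uncurry_left.aestronglyMeasurable C
    (ae_of_all _ fun q => hfC p q)

lemma measurable_rowMean [SFinite ρ] (hf : Measurable (uncurry f)) : Measurable (rowMean ρ f) :=
  hf.stronglyMeasurable.integral_prod_right'.measurable

variable [IsProbabilityMeasure ρ]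

lemma abs_rowMean_le (hfC : ∀ p q, |f p q| ≤ C) (p : W) : |rowMean ρ f p| ≤ C := by
  simpa [rowMean] using norm_integral_le_of_norm_le_const (μ := ρ) (f := f p) (ae_of_all _ (hfC p))

lemma memLp_top_rowMean (hf : Measurable (uncurry f)) (hfC : ∀ p q, |f p q| ≤ C) :
    MemLp (rowMean ρ f) ∞ ρ :=
  memLp_top_of_bound (measurable_rowMean hf).aestronglyMeasurable C
    (ae_of_all _ (abs_rowMean_le hfC))

lemma memLp_top_doubleCentered (hf : Measurable (uncurry f)) (hfC : ∀ p q, |f p q| ≤ C) :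
    MemLp (doubleCentered ρ f) ∞ (ρ.prod ρ) :=
  (((memLp_top_uncurry hf hfC).sub ((memLp_top_rowMean hf hfC).comp_fst ρ)).sub
    ((memLp_top_rowMean hf hfC).comp_snd ρ)).add (memLp_const _)

lemma integral_sub_rowMean (hf : Measurable (uncurry f)) (hfC : ∀ p q, |f p q| ≤ C) (p : W) :
    ∫ q, (f p q - rowMean ρ f q) ∂ρ = rowMean ρ f p - ∫ q, rowMean ρ f q ∂ρ :=
  integral_sub ((memLp_top_apply hf hfC p).integrable le_top)
    ((memLp_top_rowMean hf hfC).integrable le_top)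

theorem integral_doubleCentered_mul_eq_integral_covariance
    (hf : Measurable (uncurry f)) (hg : Measurable (uncurry g))
    (hfC : ∀ p q, |f p q| ≤ C) (hgC : ∀ p q, |g p q| ≤ C)
    (hf_symm : ∀ p q, f p q = f q p) (hg_symm : ∀ p q, g p q = g q p) :
    ∫ z, doubleCentered ρ f z * doubleCentered ρ g z ∂ρ.prod ρ
      = ∫ p, cov[f p, g p; ρ] ∂ρ - cov[rowMean ρ f, rowMean ρ g; ρ] := by
  set m := rowMean ρ f
  set n := rowMean ρ g
  have hm := memLp_top_rowMean (ρ := ρ) hf hfC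
  have hn := memLp_top_rowMean (ρ := ρ) hg hgC
  have hK : Integrable (uncurry fun p q => (f p q - m q) * (g p q - n q)) (ρ.prod ρ) :=
    (((memLp_top_uncurry hg hgC).sub (hn.comp_snd ρ)).mul'
      ((memLp_top_uncurry hf hfC).sub (hm.comp_snd ρ))).integrable le_top
  -- For fixed `p`, the row `q ↦ doubleCentered ρ f (p, q)` is `f p - m` minus its own mean.
  have hrow : ∀ p, ∫ q, doubleCentered ρ f (p, q) * doubleCentered ρ g (p, q) ∂ρ
      = ∫ q, (f p q - m q) * (g p q - n q) ∂ρ - (m p - ρ[m]) * (n p - ρ[n]) := by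
    intro p
    have hcov := covariance_eq_sub (X := fun q => f p q - m q) (Y := fun q => g p q - n q)
      (((memLp_top_apply hf hfC p).sub hm).mono_exponent le_top)
      (((memLp_top_apply hg hgC p).sub hn).mono_exponent le_top)
    rw [covariance, integral_sub_rowMean hf hfC, integral_sub_rowMean hg hgC] at hcov
    refine (integral_congr_ae (ae_of_all _ fun q => ?_)).trans hcov
    simp only [doubleCentered, m, n]
    ring
  calc ∫ z, doubleCentered ρ f z * doubleCentered ρ g z ∂ρ.prod ρ
      = ∫ p, (∫ q, (f p q - m q) * (g p q - n q) ∂ρ - (m p - ρ[m]) * (n p - ρ[n])) ∂ρ := by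
        rw [integral_prod _ (((memLp_top_doubleCentered hg hgC).mul'
          (memLp_top_doubleCentered hf hfC)).integrable le_top)]
        exact integral_congr_ae (ae_of_all _ hrow)
    _ = ∫ q, ∫ p, (f p q - m q) * (g p q - n q) ∂ρ ∂ρ - cov[m, n; ρ] := by
        have hcentered : Integrable (fun p => (m p - ρ[m]) * (n p - ρ[n])) ρ :=
          ((hn.sub (memLp_const _)).mul' (hm.sub (memLp_const _))).integrable le_top
        have hrows : Integrable (fun p => ∫ q, (f p q - m q) * (g p q - n q) ∂ρ) ρ :=
          hK.integral_prod_left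
        rw [integral_sub hrows hcentered, integral_integral_swap hK]
        rfl
    _ = ∫ q, cov[f q, g q; ρ] ∂ρ - cov[m, n; ρ] := by
        congr 1
        refine integral_congr_ae (ae_of_all _ fun q => ?_)
        simp only [covariance, hf_symm _ q, hg_symm _ q]
        rfl

theorem integral_doubleCentered_mul
    (hf : Measurable (uncurry f)) (hg : Measurable (uncurry g))
    (hfC : ∀ p q, |f p q| ≤ C) (hgC : ∀ p q, |g p q| ≤ C)
    (hf_symm : ∀ p q, f p q = f q p) (hg_symm : ∀ p q, g p q = g q p) :
    ∫ z, doubleCentered ρ f z * doubleCentered ρ g z ∂ρ.prod ρ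
      = ∫ z, f z.1 z.2 * g z.1 z.2 ∂ρ.prod ρ
        + (∫ z, f z.1 z.2 ∂ρ.prod ρ) * (∫ z, g z.1 z.2 ∂ρ.prod ρ)
        - 2 * ∫ p, rowMean ρ f p * rowMean ρ g p ∂ρ := by
  have hm := memLp_top_rowMean (ρ := ρ) hf hfC
  have hn := memLp_top_rowMean (ρ := ρ) hg hgC
  have hF := memLp_top_uncurry (ρ := ρ) hf hfC
  have hG := memLp_top_uncurry (ρ := ρ) hg hgC
  have hrow : ∀ p, cov[f p, g p; ρ]
      = ∫ q, f p q * g p q ∂ρ - rowMean ρ f p * rowMean ρ g p := fun p =>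
    covariance_eq_sub ((memLp_top_apply hf hfC p).mono_exponent le_top)
      ((memLp_top_apply hg hgC p).mono_exponent le_top)
  have hFG : Integrable (fun z : W × W => f z.1 z.2 * g z.1 z.2) (ρ.prod ρ) :=
    (hG.mul' hF).integrable le_top
  rw [integral_doubleCentered_mul_eq_integral_covariance hf hg hfC hgC hf_symm hg_symm,
    integral_congr_ae (ae_of_all _ hrow),
    integral_sub hFG.integral_prod_left ((hn.mul' hm).integrable le_top),
    covariance_eq_sub (hm.mono_exponent le_top) (hn.mono_exponent le_top),
    integral_prod _ hFG, integral_prod (fun z : W × W => f z.1 z.2) (hF.integrable le_top),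
    integral_prod (fun z : W × W => g z.1 z.2) (hG.integrable le_top)]
  simp only [Pi.mul_apply, rowMean]
  ring

end BoundedKernel

section IntervalKernel

variable {ρ : Measure W} [IsProbabilityMeasure ρ] {f g : W → W → ℝ} {a b : ℝ}

theorem integral_doubleCentered_sq_le (hf : Measurable (uncurry f))
    (hf_symm : ∀ p q, f p q = f q p) (hfab : ∀ p q, f p q ∈ Set.Icc a b) :
    ∫ z, doubleCentered ρ f z * doubleCentered ρ f z ∂ρ.prod ρ ≤ ((b - a) / 2) ^ 2 := by
  have hfC p q : |f p q| ≤ max |a| |b| := abs_le_max_abs_abs (hfab p q).1 (hfab p q).2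
  have hrow p : cov[f p, f p; ρ] = Var[f p; ρ] :=
    covariance_self hf.of_uncurry_left.aemeasurable
  have hrows : ∫ p, cov[f p, f p; ρ] ∂ρ ≤ ((b - a) / 2) ^ 2 := by
    simp_rw [hrow]
    refine (integral_mono_of_nonneg (ae_of_all _ fun p => variance_nonneg _ _)
      (integrable_const (((b - a) / 2) ^ 2)) (ae_of_all _ fun p => ?_)).trans_eq (by simp)
    exact variance_le_sq_of_bounded (ae_of_all _ (hfab p)) hf.of_uncurry_left.aemeasurable
  have hmean : 0 ≤ cov[rowMean ρ f, rowMean ρ f; ρ] := by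
    rw [covariance_self (measurable_rowMean hf).aemeasurable]
    exact variance_nonneg _ _
  rw [integral_doubleCentered_mul_eq_integral_covariance hf hf hfC hfC hf_symm hf_symm]
  linarith

theorem dCovSq_kernel_le (hf : Measurable (uncurry f)) (hg : Measurable (uncurry g))
    (hf_symm : ∀ p q, f p q = f q p) (hg_symm : ∀ p q, g p q = g q p)
    (hfab : ∀ p q, f p q ∈ Set.Icc a b) (hgab : ∀ p q, g p q ∈ Set.Icc a b) :
    ∫ z, f z.1 z.2 * g z.1 z.2 ∂ρ.prod ρ
        + (∫ z, f z.1 z.2 ∂ρ.prod ρ) * (∫ z, g z.1 z.2 ∂ρ.prod ρ)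
        - 2 * ∫ p, rowMean ρ f p * rowMean ρ g p ∂ρ ≤ ((b - a) / 2) ^ 2 := by
  have hfC p q : |f p q| ≤ max |a| |b| := abs_le_max_abs_abs (hfab p q).1 (hfab p q).2
  have hgC p q : |g p q| ≤ max |a| |b| := abs_le_max_abs_abs (hgab p q).1 (hgab p q).2
  have hU := memLp_top_doubleCentered (ρ := ρ) hf hfC
  have hV := memLp_top_doubleCentered (ρ := ρ) hg hgC
  rw [← integral_doubleCentered_mul hf hg hfC hgC hf_symm hg_symm]
  have hamgm : ∫ z, doubleCentered ρ f z * doubleCentered ρ g z ∂ρ.prod ρ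
      ≤ ∫ z, (doubleCentered ρ f z * doubleCentered ρ f z
          + doubleCentered ρ g z * doubleCentered ρ g z) / 2 ∂ρ.prod ρ :=
    integral_mono ((hV.mul' hU).integrable le_top)
      ((((hU.mul' hU).integrable le_top).add ((hV.mul' hV).integrable le_top)).div_const 2)
      fun z => by nlinarith [mul_self_nonneg (doubleCentered ρ f z - doubleCentered ρ g z)]
  rw [integral_div, integral_add ((hU.mul' hU).integrable le_top)
    ((hV.mul' hV).integrable le_top)] at hamgm
  linarith [integral_doubleCentered_sq_le (ρ := ρ) hf hf_symm hfab,
    integral_doubleCentered_sq_le (ρ := ρ) hg hg_symm hgab]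

end IntervalKernel

section IIDSamples

variable {Ω : Type*} [MeasurableSpace Ω] {μ : Measure Ω} {Z Z' Z'' : Ω → W}

lemma map_prodMk_eq_prod [IsFiniteMeasure μ] (hZ : Measurable Z) (hZ' : Measurable Z')
    (hind : IndepFun Z Z' μ) (hid : IdentDistrib Z Z' μ μ) :
    μ.map (fun ω => (Z ω, Z' ω)) = (μ.map Z).prod (μ.map Z) := by
  rw [(indepFun_iff_map_prod_eq_prod_map_map hZ.aemeasurable hZ'.aemeasurable).mp hind,
    hid.map_eq]

lemma map_prodMk_prodMk_eq_prod [IsFiniteMeasure μ] (hZ : Measurable Z) (hZ' : Measurable Z')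
    (hZ'' : Measurable Z'') (hind : iIndepFun ![Z, Z', Z''] μ)
    (hid1 : IdentDistrib Z Z' μ μ) (hid2 : IdentDistrib Z Z'' μ μ) :
    μ.map (fun ω => (Z ω, (Z' ω, Z'' ω))) = (μ.map Z).prod ((μ.map Z).prod (μ.map Z)) := by
  have hmeas : ∀ i, Measurable (![Z, Z', Z''] i) := by
    intro i; fin_cases i <;> assumption
  have hind₁₂ : IndepFun Z' Z'' μ := by
    simpa using hind.indepFun (show (1 : Fin 3) ≠ 2 by decide)
  have hind₀ : IndepFun Z (fun ω => (Z' ω, Z'' ω)) μ :=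
    (by simpa using hind.indepFun_prodMk hmeas 1 2 0 (by decide) (by decide) :
      IndepFun (fun ω => (Z' ω, Z'' ω)) Z μ).symm
  rw [(indepFun_iff_map_prod_eq_prod_map_map hZ.aemeasurable
      (hZ'.prodMk hZ'').aemeasurable).mp hind₀,
    (indepFun_iff_map_prod_eq_prod_map_map hZ'.aemeasurable hZ''.aemeasurable).mp hind₁₂,
    ← hid1.map_eq, ← hid2.map_eq]

variable {f g : W → W → ℝ} {C : ℝ}

lemma integral_mul_eq_integral_rowMean_mul {ρ : Measure W} [IsProbabilityMeasure ρ]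
    (hZ : Measurable Z) (hZ' : Measurable Z') (hZ'' : Measurable Z'')
    (hlaw : μ.map (fun ω => (Z ω, (Z' ω, Z'' ω))) = ρ.prod (ρ.prod ρ))
    (hf : Measurable (uncurry f)) (hg : Measurable (uncurry g))
    (hfC : ∀ p q, |f p q| ≤ C) (hgC : ∀ p q, |g p q| ≤ C) :
    ∫ ω, f (Z ω) (Z' ω) * g (Z ω) (Z'' ω) ∂μ = ∫ p, rowMean ρ f p * rowMean ρ g p ∂ρ := by
  have hmeas : Measurable fun w : W × W × W => f w.1 w.2.1 * g w.1 w.2.2 :=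
    (hf.comp (measurable_fst.prodMk measurable_snd.fst)).mul
      (hg.comp (measurable_fst.prodMk measurable_snd.snd))
  have hint : Integrable (fun w : W × W × W => f w.1 w.2.1 * g w.1 w.2.2) (ρ.prod (ρ.prod ρ)) :=
    Integrable.of_bound hmeas.aestronglyMeasurable (C * C) (ae_of_all _ fun w => by
      rw [Real.norm_eq_abs, abs_mul]
      exact mul_le_mul (hfC _ _) (hgC _ _) (abs_nonneg _) ((abs_nonneg _).trans (hfC w.1 w.2.1)))
  rw [← integral_map (f := fun w : W × W × W => f w.1 w.2.1 * g w.1 w.2.2)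
      (hZ.prodMk (hZ'.prodMk hZ'')).aemeasurable (hlaw ▸ hmeas.aestronglyMeasurable),
    hlaw, integral_prod _ hint]
  exact integral_congr_ae (ae_of_all _ fun p => integral_prod_mul (f p) (g p))

theorem dCovSq_le_of_kernel_mem_Icc [IsProbabilityMeasure μ]
    (hZ : Measurable Z) (hZ' : Measurable Z') (hZ'' : Measurable Z'')
    (hind : iIndepFun ![Z, Z', Z''] μ)
    (hid1 : IdentDistrib Z Z' μ μ) (hid2 : IdentDistrib Z Z'' μ μ)
    {a b : ℝ} (hf : Measurable (uncurry f)) (hg : Measurable (uncurry g))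
    (hf_symm : ∀ p q, f p q = f q p) (hg_symm : ∀ p q, g p q = g q p)
    (hfab : ∀ p q, f p q ∈ Set.Icc a b) (hgab : ∀ p q, g p q ∈ Set.Icc a b) :
    (∫ ω, f (Z ω) (Z' ω) * g (Z ω) (Z' ω) ∂μ)
        + (∫ ω, f (Z ω) (Z' ω) ∂μ) * (∫ ω, g (Z ω) (Z' ω) ∂μ)
        - (∫ ω, f (Z ω) (Z' ω) * g (Z ω) (Z'' ω) ∂μ)
        - (∫ ω, f (Z ω) (Z'' ω) * g (Z ω) (Z' ω) ∂μ) ≤ ((b - a) / 2) ^ 2 := by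
  have : IsProbabilityMeasure (μ.map Z) := Measure.isProbabilityMeasure_map hZ.aemeasurable
  have hpair := map_prodMk_eq_prod hZ hZ'
    (by simpa using hind.indepFun (show (0 : Fin 3) ≠ 1 by decide)) hid1
  have htriple := map_prodMk_prodMk_eq_prod hZ hZ' hZ'' hind hid1 hid2
  have hfC p q : |f p q| ≤ max |a| |b| := abs_le_max_abs_abs (hfab p q).1 (hfab p q).2
  have hgC p q : |g p q| ≤ max |a| |b| := abs_le_max_abs_abs (hgab p q).1 (hgab p q).2
  have hpair_integral {h : W × W → ℝ} (hh : Measurable h) :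
      ∫ ω, h (Z ω, Z' ω) ∂μ = ∫ z, h z ∂(μ.map Z).prod (μ.map Z) := by
    rw [← hpair, integral_map (hZ.prodMk hZ').aemeasurable
      (hpair ▸ hh.aestronglyMeasurable)]
  rw [hpair_integral (h := fun z => f z.1 z.2 * g z.1 z.2) (hf.mul hg),
    hpair_integral (h := fun z => f z.1 z.2) hf, hpair_integral (h := fun z => g z.1 z.2) hg,
    integral_mul_eq_integral_rowMean_mul hZ hZ' hZ'' htriple hf hg hfC hgC]
  simp_rw [mul_comm (f (Z _) (Z'' _))]
  rw [integral_mul_eq_integral_rowMean_mul hZ hZ' hZ'' htriple hg hf hgC hfC]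
  simp_rw [mul_comm (rowMean _ g _)]
  linarith [dCovSq_kernel_le (ρ := μ.map Z) hf hg hf_symm hg_symm hfab hgab]

end IIDSamples

theorem dCovSq_le_of_norm_sub_le {E F Ω : Type*}
    [NormedAddCommGroup E] [MeasurableSpace E] [BorelSpace E] [SecondCountableTopology E]
    [NormedAddCommGroup F] [MeasurableSpace F] [BorelSpace F] [SecondCountableTopology F]
    [MeasurableSpace Ω] {μ : Measure Ω} [IsProbabilityMeasure μ]
    {X X' X'' : Ω → E} {Y Y' Y'' : Ω → F}
    (hX : Measurable X) (hX' : Measurable X') (hX'' : Measurable X'')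
    (hY : Measurable Y) (hY' : Measurable Y') (hY'' : Measurable Y'')
    (hind : iIndepFun
      ![fun ω => (X ω, Y ω), fun ω => (X' ω, Y' ω), fun ω => (X'' ω, Y'' ω)] μ)
    (hid1 : IdentDistrib (fun ω => (X ω, Y ω)) (fun ω => (X' ω, Y' ω)) μ μ)
    (hid2 : IdentDistrib (fun ω => (X ω, Y ω)) (fun ω => (X'' ω, Y'' ω)) μ μ)
    {D : ℝ} (hXX' : ∀ᵐ ω ∂μ, ‖X ω - X' ω‖ ≤ D) (hXX'' : ∀ᵐ ω ∂μ, ‖X ω - X'' ω‖ ≤ D)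
    (hYY' : ∀ᵐ ω ∂μ, ‖Y ω - Y' ω‖ ≤ D) (hYY'' : ∀ᵐ ω ∂μ, ‖Y ω - Y'' ω‖ ≤ D) :
    (∫ ω, ‖X ω - X' ω‖ * ‖Y ω - Y' ω‖ ∂μ)
        + (∫ ω, ‖X ω - X' ω‖ ∂μ) * (∫ ω, ‖Y ω - Y' ω‖ ∂μ)
        - (∫ ω, ‖X ω - X' ω‖ * ‖Y ω - Y'' ω‖ ∂μ)
        - (∫ ω, ‖X ω - X'' ω‖ * ‖Y ω - Y' ω‖ ∂μ) ≤ D ^ 2 / 4 := by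
  obtain ⟨ω, hω⟩ := hXX'.exists
  have hD : 0 ≤ D := (norm_nonneg _).trans hω
  have key := dCovSq_le_of_kernel_mem_Icc (hX.prodMk hY) (hX'.prodMk hY') (hX''.prodMk hY'')
    hind hid1 hid2 (a := 0) (b := D)
    (f := fun p q : E × F => min ‖p.1 - q.1‖ D) (g := fun p q : E × F => min ‖p.2 - q.2‖ D)
    (by fun_prop) (by fun_prop)
    (fun p q => by rw [norm_sub_rev]) (fun p q => by rw [norm_sub_rev])
    (fun p q => ⟨le_min (norm_nonneg _) hD, min_le_right _ _⟩)
    (fun p q => ⟨le_min (norm_nonneg _) hD, min_le_right _ _⟩)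
  have htrunc {u : Ω → ℝ} (hu : ∀ᵐ ω ∂μ, u ω ≤ D) : ∫ ω, min (u ω) D ∂μ = ∫ ω, u ω ∂μ :=
    integral_congr_ae (hu.mono fun _ => min_eq_left)
  have htrunc_mul {u v : Ω → ℝ} (hu : ∀ᵐ ω ∂μ, u ω ≤ D) (hv : ∀ᵐ ω ∂μ, v ω ≤ D) :
      ∫ ω, min (u ω) D * min (v ω) D ∂μ = ∫ ω, u ω * v ω ∂μ :=
    integral_congr_ae (by filter_upwards [hu, hv] with ω h h'; rw [min_eq_left h, min_eq_left h'])
  dsimp only at key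
  rwa [htrunc_mul hXX' hYY', htrunc hXX', htrunc hYY', htrunc_mul hXX' hYY'',
    htrunc_mul hXX'' hYY', sub_zero, div_pow, show (2 : ℝ) ^ 2 = 4 by norm_num] at key

end DistanceCovariance

lemma EuclideanSpace.norm_sub_le_sqrt_card {ι : Type*} [Fintype ι] {a : ℝ}
    {x y : EuclideanSpace ℝ ι} (hx : ∀ i, x i ∈ Set.Icc a (a + 1))
    (hy : ∀ i, y i ∈ Set.Icc a (a + 1)) :
    ‖x - y‖ ≤ Real.sqrt (Fintype.card ι) := by
  rw [EuclideanSpace.norm_eq]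
  refine Real.sqrt_le_sqrt ((Finset.sum_le_card_nsmul _ _ 1 fun i _ => ?_).trans (by simp))
  rw [PiLp.sub_apply, Real.norm_eq_abs, sq_abs, sq_le_one_iff_abs_le_one]
  exact abs_sub_le_iff.2 ⟨by linarith [(hx i).2, (hy i).1], by linarith [(hx i).1, (hy i).2]⟩

theorem dCov_le_of_unit_intervals_general
    {Ω : Type*} [MeasurableSpace Ω] (μ : Measure Ω) [IsProbabilityMeasure μ]
    (a c : ℝ) (N : ℕ)
    (X X' X'' : Ω → EuclideanSpace ℝ (Fin N))
    (Y Y' Y'' : Ω → EuclideanSpace ℝ (Fin N))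
    (hXm : Measurable X) (hX'm : Measurable X') (hX''m : Measurable X'')
    (hYm : Measurable Y) (hY'm : Measurable Y') (hY''m : Measurable Y'')
    (hindep : iIndepFun
      ![fun ω => (X ω, Y ω), fun ω => (X' ω, Y' ω), fun ω => (X'' ω, Y'' ω)] μ)
    (hid1 : IdentDistrib (fun ω => (X ω, Y ω)) (fun ω => (X' ω, Y' ω)) μ μ)
    (hid2 : IdentDistrib (fun ω => (X ω, Y ω)) (fun ω => (X'' ω, Y'' ω)) μ μ)
    (hXab : ∀ᵐ ω ∂μ, ∀ i, X ω i ∈ Set.Icc a (a + 1))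
    (hX'ab : ∀ᵐ ω ∂μ, ∀ i, X' ω i ∈ Set.Icc a (a + 1))
    (hX''ab : ∀ᵐ ω ∂μ, ∀ i, X'' ω i ∈ Set.Icc a (a + 1))
    (hYcd : ∀ᵐ ω ∂μ, ∀ i, Y ω i ∈ Set.Icc c (c + 1))
    (hY'cd : ∀ᵐ ω ∂μ, ∀ i, Y' ω i ∈ Set.Icc c (c + 1))
    (hY''cd : ∀ᵐ ω ∂μ, ∀ i, Y'' ω i ∈ Set.Icc c (c + 1)) :
    Real.sqrt ((∫ ω, ‖X ω - X' ω‖ * ‖Y ω - Y' ω‖ ∂μ)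
          + (∫ ω, ‖X ω - X' ω‖ ∂μ) * (∫ ω, ‖Y ω - Y' ω‖ ∂μ)
          - (∫ ω, ‖X ω - X' ω‖ * ‖Y ω - Y'' ω‖ ∂μ)
          - (∫ ω, ‖X ω - X'' ω‖ * ‖Y ω - Y' ω‖ ∂μ))
        ≤ Real.sqrt N / 2
      ∧ (∫ ω, ‖X ω - X' ω‖ * ‖Y ω - Y' ω‖ ∂μ)
          + (∫ ω, ‖X ω - X' ω‖ ∂μ) * (∫ ω, ‖Y ω - Y' ω‖ ∂μ)
          - (∫ ω, ‖X ω - X' ω‖ * ‖Y ω - Y'' ω‖ ∂μ)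
          - (∫ ω, ‖X ω - X'' ω‖ * ‖Y ω - Y' ω‖ ∂μ)
        ≤ (N : ℝ) / 4 := by
  have hcube {l : ℝ} {U U' : Ω → EuclideanSpace ℝ (Fin N)}
      (hU : ∀ᵐ ω ∂μ, ∀ i, U ω i ∈ Set.Icc l (l + 1))
      (hU' : ∀ᵐ ω ∂μ, ∀ i, U' ω i ∈ Set.Icc l (l + 1)) :
      ∀ᵐ ω ∂μ, ‖U ω - U' ω‖ ≤ Real.sqrt N := by
    filter_upwards [hU, hU'] with ω h h'
    simpa using EuclideanSpace.norm_sub_le_sqrt_card h h'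
  have hdCovSq := DistanceCovariance.dCovSq_le_of_norm_sub_le hXm hX'm hX''m hYm hY'm hY''m
    hindep hid1 hid2 (hcube hXab hX'ab) (hcube hXab hX''ab) (hcube hYcd hY'cd) (hcube hYcd hY''cd)
  rw [Real.sq_sqrt N.cast_nonneg] at hdCovSq
  refine ⟨?_, hdCovSq⟩
  calc _ ≤ Real.sqrt (N / 4) := Real.sqrt_le_sqrt hdCovSq
    _ = Real.sqrt N / 2 := by
      rw [Real.sqrt_div' _ (by norm_num : (0 : ℝ) ≤ 4), show (4 : ℝ) = 2 ^ 2 by norm_num,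
        Real.sqrt_sq (by norm_num)]

/-- Corollary: for iid pairs `(X,Y)`, `(X',Y')`, `(X'',Y'')` with `X` taking values in
`[a,a+1]^N` and `Y` in `[c,c+1]^N`, the distance covariance satisfies
`dCov(X,Y) ≤ √N / 2`; equivalently `dCov²(X,Y) ≤ N/4`, where
`dCov²(X,Y) = E[‖X−X'‖‖Y−Y'‖] + E[‖X−X'‖]E[‖Y−Y'‖] − E[‖X−X'‖‖Y−Y''‖] − E[‖X−X''‖‖Y−Y'‖]`
and `dCov(X,Y)` is its nonnegative square root. -/
theorem dCov_le_of_unit_intervals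
    {Ω : Type*} [MeasurableSpace Ω] (μ : Measure Ω) [IsProbabilityMeasure μ]
    (a c : ℝ) (N : ℕ) (hN : 1 ≤ N)
    (X X' X'' : Ω → EuclideanSpace ℝ (Fin N))
    (Y Y' Y'' : Ω → EuclideanSpace ℝ (Fin N))
    (hXm : Measurable X) (hX'm : Measurable X') (hX''m : Measurable X'')
    (hYm : Measurable Y) (hY'm : Measurable Y') (hY''m : Measurable Y'')
    (hindep : iIndepFun
      ![fun ω => (X ω, Y ω), fun ω => (X' ω, Y' ω), fun ω => (X'' ω, Y'' ω)] μ)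
    (hid1 : IdentDistrib (fun ω => (X ω, Y ω)) (fun ω => (X' ω, Y' ω)) μ μ)
    (hid2 : IdentDistrib (fun ω => (X ω, Y ω)) (fun ω => (X'' ω, Y'' ω)) μ μ)
    (hXab : ∀ᵐ ω ∂μ, ∀ i, X ω i ∈ Set.Icc a (a + 1))
    (hX'ab : ∀ᵐ ω ∂μ, ∀ i, X' ω i ∈ Set.Icc a (a + 1))
    (hX''ab : ∀ᵐ ω ∂μ, ∀ i, X'' ω i ∈ Set.Icc a (a + 1))
    (hYcd : ∀ᵐ ω ∂μ, ∀ i, Y ω i ∈ Set.Icc c (c + 1))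
    (hY'cd : ∀ᵐ ω ∂μ, ∀ i, Y' ω i ∈ Set.Icc c (c + 1))
    (hY''cd : ∀ᵐ ω ∂μ, ∀ i, Y'' ω i ∈ Set.Icc c (c + 1)) :
    Real.sqrt ((∫ ω, ‖X ω - X' ω‖ * ‖Y ω - Y' ω‖ ∂μ)
          + (∫ ω, ‖X ω - X' ω‖ ∂μ) * (∫ ω, ‖Y ω - Y' ω‖ ∂μ)
          - (∫ ω, ‖X ω - X' ω‖ * ‖Y ω - Y'' ω‖ ∂μ)
          - (∫ ω, ‖X ω - X'' ω‖ * ‖Y ω - Y' ω‖ ∂μ))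
        ≤ Real.sqrt N / 2
      ∧ (∫ ω, ‖X ω - X' ω‖ * ‖Y ω - Y' ω‖ ∂μ)
          + (∫ ω, ‖X ω - X' ω‖ ∂μ) * (∫ ω, ‖Y ω - Y' ω‖ ∂μ)
          - (∫ ω, ‖X ω - X' ω‖ * ‖Y ω - Y'' ω‖ ∂μ)
          - (∫ ω, ‖X ω - X'' ω‖ * ‖Y ω - Y' ω‖ ∂μ)
        ≤ (N : ℝ) / 4 :=
  dCov_le_of_unit_intervals_general μ a c N X X' X'' Y Y' Y'' hXm hX'm hX''m hYm hY'm hY''m hindep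
    hid1 hid2 hXab hX'ab hX''ab hYcd hY'cd hY''cd
end

section
/- Corollary: Let (X,Y), (X',Y'), (X'',Y'') be iid pairs of real random variables, with X taking values in [a,b] and Y taking values in [c,d], for real numbers a ≤ b, c ≤ d. Then dCov(X,Y) ≤ (1/2)·√((b−a)(d−c)). Equivalently, dCov²(X,Y) ≤ (1/4)·(b−a)(d−c). -/
/-!
For `x, x' ∈ [a, b]` one has `2 |x - x'| = ∫_{(a, b]} |σₜ x - σₜ x'| dt`, where `σₜ x` is `1`
if `x < t` and `-1` otherwise. Applying this in both coordinates and using Fubini, `dCov²(X, Y)`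
is `1/4` of the integral over `(t, s) ∈ (a, b] × (c, d]` of `dCov²(σₜ X, σₛ Y)`. For `±1`-valued
variables `|u - u'| = 1 - u u'`, so every term of `dCov²` factorizes over the independent copies,
and `dCov²(σₜ X, σₛ Y)` collapses to `cov(σₜ X, σₛ Y)²`. This is at most `1`, because the four
cells of the joint law of two signs have nonnegative mass.
-/

open MeasureTheory ProbabilityTheory Set

noncomputable def dCovSq {Ω : Type*} [MeasurableSpace Ω] (μ : Measure Ω)
    (X X' X'' Y Y' Y'' : Ω → ℝ) : ℝ :=
  (∫ ω, |X ω - X' ω| * |Y ω - Y' ω| ∂μ)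
    + (∫ ω, |X ω - X' ω| ∂μ) * (∫ ω, |Y ω - Y' ω| ∂μ)
    - (∫ ω, |X ω - X' ω| * |Y ω - Y'' ω| ∂μ)
    - (∫ ω, |X ω - X'' ω| * |Y ω - Y' ω| ∂μ)

lemma abs_sub_eq_one_sub_mul {s t : ℝ} (hs : |s| = 1) (ht : |t| = 1) : |s - t| = 1 - s * t := by
  rcases (abs_eq zero_le_one).1 hs with rfl | rfl <;>
    rcases (abs_eq zero_le_one).1 ht with rfl | rfl <;> norm_num

lemma sq_sub_mul_le_one {m n r : ℝ} (h₁ : 0 ≤ 1 + m + n + r) (h₂ : 0 ≤ 1 + m - n - r)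
    (h₃ : 0 ≤ 1 - m + n - r) (h₄ : 0 ≤ 1 - m - n + r) : (r - m * n) ^ 2 ≤ 1 := by
  have hup : r - m * n ≤ 1 := by
    rcases le_total n m with h | h
    · nlinarith [mul_nonneg (sub_nonneg.2 h) (by linarith : (0:ℝ) ≤ 1 - m), sq_nonneg m]
    · nlinarith [mul_nonneg (sub_nonneg.2 h) (by linarith : (0:ℝ) ≤ 1 - n), sq_nonneg n]
  have hlo : -1 ≤ r - m * n := by
    rcases le_total 0 (m + n) with h | h
    · nlinarith [mul_nonneg h (by linarith : (0:ℝ) ≤ 1 - m), sq_nonneg m]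
    · nlinarith [mul_nonneg (neg_nonneg.2 h) (by linarith : (0:ℝ) ≤ 1 + m), sq_nonneg m]
  nlinarith

section Moments

variable {Ω : Type*} [MeasurableSpace Ω] {μ : Measure Ω}

lemma integrable_of_abs_eq_one [IsFiniteMeasure μ] {f : Ω → ℝ} (hf : AEMeasurable f μ)
    (h1 : ∀ ω, |f ω| = 1) : Integrable f μ :=
  .of_bound hf.aestronglyMeasurable 1 (ae_of_all _ fun ω => (h1 ω).le)

variable [IsProbabilityMeasure μ]

lemma integral_one_sub_mul_one_sub {u v : Ω → ℝ} (hu : Integrable u μ) (hv : Integrable v μ)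
    (huv : Integrable (fun ω => u ω * v ω) μ) :
    ∫ ω, (1 - u ω) * (1 - v ω) ∂μ
      = 1 - (∫ ω, u ω ∂μ) - (∫ ω, v ω ∂μ) + ∫ ω, u ω * v ω ∂μ := by
  have hexp : ∀ ω, (1 - u ω) * (1 - v ω) = 1 - u ω - v ω + u ω * v ω := fun ω => by ring
  have h₁ : Integrable (fun ω => 1 - u ω) μ := (integrable_const 1).sub hu
  have h₂ : Integrable (fun ω => 1 - u ω - v ω) μ := h₁.sub hv
  simp_rw [hexp]
  rw [integral_add h₂ huv, integral_sub h₁ hv, integral_sub (integrable_const 1) hu]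
  simp

lemma covariance_sq_le_one {S T : Ω → ℝ} (hS : AEStronglyMeasurable S μ)
    (hT : AEStronglyMeasurable T μ) (hS1 : ∀ᵐ ω ∂μ, |S ω| ≤ 1)
    (hT1 : ∀ᵐ ω ∂μ, |T ω| ≤ 1) :
    cov[S, T; μ] ^ 2 ≤ 1 := by
  have iS : Integrable S μ := .of_bound hS 1 hS1
  have iT : Integrable T μ := .of_bound hT 1 hT1
  have iST : Integrable (fun ω => S ω * T ω) μ := by
    refine .of_bound (hS.mul hT) 1 ?_
    filter_upwards [hS1, hT1] with ω h1 h2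
    simpa [abs_mul] using mul_le_one₀ h1 (abs_nonneg _) h2
  have cell : ∀ ε δ : ℝ, |ε| = 1 → |δ| = 1 →
      0 ≤ 1 - ε * (∫ ω, S ω ∂μ) - δ * (∫ ω, T ω ∂μ)
        + ε * δ * ∫ ω, S ω * T ω ∂μ := by
    intro ε δ hε hδ
    have hpos : 0 ≤ ∫ ω, (1 - ε * S ω) * (1 - δ * T ω) ∂μ := by
      refine integral_nonneg_of_ae ?_
      filter_upwards [hS1, hT1] with ω h1 h2
      refine mul_nonneg (sub_nonneg.2 ((le_abs_self _).trans ?_))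
        (sub_nonneg.2 ((le_abs_self _).trans ?_))
      · rwa [abs_mul, hε, one_mul]
      · rwa [abs_mul, hδ, one_mul]
    have hprod : ∀ ω, ε * S ω * (δ * T ω) = ε * δ * (S ω * T ω) := fun ω => by ring
    rwa [integral_one_sub_mul_one_sub (iS.const_mul ε) (iT.const_mul δ)
      (by simpa only [hprod] using iST.const_mul (ε * δ)), integral_const_mul, integral_const_mul,
      funext hprod, integral_const_mul] at hpos
  rw [covariance_eq_sub (.of_bound hS 1 hS1) (.of_bound hT 1 hT1)]
  simp only [Pi.mul_apply]
  apply sq_sub_mul_le_one <;>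
    linarith [cell 1 1 (by simp) (by simp), cell 1 (-1) (by simp) (by simp),
      cell (-1) 1 (by simp) (by simp), cell (-1) (-1) (by simp) (by simp)]

end Moments

section IID

variable {Ω α : Type*} [MeasurableSpace Ω] [MeasurableSpace α] {μ : Measure Ω}
  {Z Z' Z'' : Ω → α}

lemma integral_comp_mul_comp_of_iid (hind : IndepFun Z Z' μ) (hid : IdentDistrib Z Z' μ μ)
    {f g : α → ℝ} (hf : Measurable f) (hg : Measurable g) :
    ∫ ω, f (Z ω) * g (Z' ω) ∂μ = (∫ ω, f (Z ω) ∂μ) * ∫ ω, g (Z ω) ∂μ := by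
  rw [hind.integral_fun_comp_mul_comp hid.aemeasurable_fst hid.aemeasurable_snd
    hf.aestronglyMeasurable hg.aestronglyMeasurable]
  exact congrArg _ (hid.comp hg).integral_eq.symm

lemma integral_comp_mul_comp_mul_comp_of_iid (h₁ : IndepFun Z Z' μ)
    (h₂ : IndepFun (fun ω => (Z ω, Z' ω)) Z'' μ) (hid' : IdentDistrib Z Z' μ μ)
    (hid'' : IdentDistrib Z Z'' μ μ) {f g h : α → ℝ} (hf : Measurable f) (hg : Measurable g)
    (hh : Measurable h) :
    ∫ ω, f (Z ω) * g (Z' ω) * h (Z'' ω) ∂μ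
      = (∫ ω, f (Z ω) ∂μ) * (∫ ω, g (Z ω) ∂μ) * ∫ ω, h (Z ω) ∂μ := by
  have hsplit := h₂.integral_fun_comp_mul_comp (f := fun p => f p.1 * g p.2)
    (hid'.aemeasurable_fst.prodMk hid'.aemeasurable_snd) hid''.aemeasurable_snd
    (by fun_prop) hh.aestronglyMeasurable
  dsimp only at hsplit
  rw [hsplit, integral_comp_mul_comp_of_iid h₁ hid' hf hg]
  exact congrArg _ (hid''.comp hh).integral_eq.symm

variable [IsProbabilityMeasure μ] {φ ψ : α → ℝ}

lemma integral_abs_sub_comp_of_iid (hind : IndepFun Z Z' μ) (hid : IdentDistrib Z Z' μ μ)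
    (hφ : Measurable φ) (hφ1 : ∀ x, |φ x| = 1) :
    ∫ ω, |φ (Z ω) - φ (Z' ω)| ∂μ = 1 - (∫ ω, φ (Z ω) ∂μ) ^ 2 := by
  have := hid.aemeasurable_fst
  have := hid.aemeasurable_snd
  simp_rw [abs_sub_eq_one_sub_mul (hφ1 _) (hφ1 _)]
  rw [integral_sub (integrable_const 1) (integrable_of_abs_eq_one (by fun_prop)
    (fun ω => by simp [abs_mul, hφ1])), integral_comp_mul_comp_of_iid hind hid hφ hφ]
  simp [sq]

lemma integral_abs_sub_mul_abs_sub_comp_of_iid (hind : IndepFun Z Z' μ)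
    (hid : IdentDistrib Z Z' μ μ) (hφ : Measurable φ) (hψ : Measurable ψ)
    (hφ1 : ∀ x, |φ x| = 1) (hψ1 : ∀ x, |ψ x| = 1) :
    ∫ ω, |φ (Z ω) - φ (Z' ω)| * |ψ (Z ω) - ψ (Z' ω)| ∂μ
      = 1 - (∫ ω, φ (Z ω) ∂μ) ^ 2 - (∫ ω, ψ (Z ω) ∂μ) ^ 2
        + (∫ ω, φ (Z ω) * ψ (Z ω) ∂μ) ^ 2 := by
  have := hid.aemeasurable_fst
  have := hid.aemeasurable_snd
  simp_rw [abs_sub_eq_one_sub_mul (hφ1 _) (hφ1 _), abs_sub_eq_one_sub_mul (hψ1 _) (hψ1 _)]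
  rw [integral_one_sub_mul_one_sub (integrable_of_abs_eq_one (by fun_prop)
      (fun ω => by simp [abs_mul, hφ1]))
    (integrable_of_abs_eq_one (by fun_prop) (fun ω => by simp [abs_mul, hψ1]))
    (integrable_of_abs_eq_one (by fun_prop) (fun ω => by simp [abs_mul, hφ1, hψ1]))]
  have hregroup : ∀ ω, φ (Z ω) * φ (Z' ω) * (ψ (Z ω) * ψ (Z' ω))
      = (φ * ψ) (Z ω) * (φ * ψ) (Z' ω) := fun ω => by simp only [Pi.mul_apply]; ring
  rw [funext hregroup, integral_comp_mul_comp_of_iid hind hid hφ hφ,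
    integral_comp_mul_comp_of_iid hind hid hψ hψ,
    integral_comp_mul_comp_of_iid hind hid (hφ.mul hψ) (hφ.mul hψ)]
  simp only [Pi.mul_apply, sq]

lemma integral_abs_sub_mul_abs_sub_comp_of_iid₃ (h₁ : IndepFun Z Z' μ)
    (h₂ : IndepFun (fun ω => (Z ω, Z' ω)) Z'' μ) (hid' : IdentDistrib Z Z' μ μ)
    (hid'' : IdentDistrib Z Z'' μ μ) (hφ : Measurable φ) (hψ : Measurable ψ)
    (hφ1 : ∀ x, |φ x| = 1) (hψ1 : ∀ x, |ψ x| = 1) :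
    ∫ ω, |φ (Z ω) - φ (Z' ω)| * |ψ (Z ω) - ψ (Z'' ω)| ∂μ
      = 1 - (∫ ω, φ (Z ω) ∂μ) ^ 2 - (∫ ω, ψ (Z ω) ∂μ) ^ 2
        + (∫ ω, φ (Z ω) * ψ (Z ω) ∂μ) * (∫ ω, φ (Z ω) ∂μ)
          * ∫ ω, ψ (Z ω) ∂μ := by
  have := hid'.aemeasurable_fst
  have := hid'.aemeasurable_snd
  have := hid''.aemeasurable_snd
  have h₁₃ : IndepFun Z Z'' μ := h₂.comp measurable_fst measurable_id
  simp_rw [abs_sub_eq_one_sub_mul (hφ1 _) (hφ1 _), abs_sub_eq_one_sub_mul (hψ1 _) (hψ1 _)]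
  rw [integral_one_sub_mul_one_sub (integrable_of_abs_eq_one (by fun_prop)
      (fun ω => by simp [abs_mul, hφ1]))
    (integrable_of_abs_eq_one (by fun_prop) (fun ω => by simp [abs_mul, hψ1]))
    (integrable_of_abs_eq_one (by fun_prop) (fun ω => by simp [abs_mul, hφ1, hψ1]))]
  have hregroup : ∀ ω, φ (Z ω) * φ (Z' ω) * (ψ (Z ω) * ψ (Z'' ω))
      = (φ * ψ) (Z ω) * φ (Z' ω) * ψ (Z'' ω) := fun ω => by simp only [Pi.mul_apply]; ring
  rw [funext hregroup, integral_comp_mul_comp_of_iid h₁ hid' hφ hφ,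
    integral_comp_mul_comp_of_iid h₁₃ hid'' hψ hψ,
    integral_comp_mul_comp_mul_comp_of_iid h₁ h₂ hid' hid'' (hφ.mul hψ) hφ hψ]
  simp only [Pi.mul_apply, sq]

theorem dCovSq_comp_eq_covariance_sq (hind : iIndepFun ![Z, Z', Z''] μ)
    (hid' : IdentDistrib Z Z' μ μ) (hid'' : IdentDistrib Z Z'' μ μ) (hφ : Measurable φ)
    (hψ : Measurable ψ) (hφ1 : ∀ x, |φ x| = 1) (hψ1 : ∀ x, |ψ x| = 1) :
    dCovSq μ (fun ω => φ (Z ω)) (fun ω => φ (Z' ω)) (fun ω => φ (Z'' ω))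
        (fun ω => ψ (Z ω)) (fun ω => ψ (Z' ω)) (fun ω => ψ (Z'' ω))
      = cov[fun ω => φ (Z ω), fun ω => ψ (Z ω); μ] ^ 2 := by
  have hmeas : ∀ i, AEMeasurable (![Z, Z', Z''] i) μ := by
    intro i
    fin_cases i
    exacts [hid'.aemeasurable_fst, hid'.aemeasurable_snd, hid''.aemeasurable_snd]
  have h₁₂ : IndepFun Z Z' μ := hind.indepFun (i := 0) (j := 1) (by decide)
  have h₁₃ : IndepFun Z Z'' μ := hind.indepFun (i := 0) (j := 2) (by decide)
  have h₁₂₃ : IndepFun (fun ω => (Z ω, Z' ω)) Z'' μ :=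
    hind.indepFun_prodMk₀ hmeas 0 1 2 (by decide) (by decide)
  have h₁₃₂ : IndepFun (fun ω => (Z ω, Z'' ω)) Z' μ :=
    hind.indepFun_prodMk₀ hmeas 0 2 1 (by decide) (by decide)
  have hφZ : MemLp (fun ω => φ (Z ω)) 2 μ :=
    .of_bound (hφ.comp_aemeasurable hid'.aemeasurable_fst).aestronglyMeasurable 1
      (ae_of_all _ fun ω => (hφ1 _).le)
  have hψZ : MemLp (fun ω => ψ (Z ω)) 2 μ :=
    .of_bound (hψ.comp_aemeasurable hid'.aemeasurable_fst).aestronglyMeasurable 1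
      (ae_of_all _ fun ω => (hψ1 _).le)
  rw [dCovSq, covariance_eq_sub hφZ hψZ,
    integral_abs_sub_mul_abs_sub_comp_of_iid h₁₂ hid' hφ hψ hφ1 hψ1,
    integral_abs_sub_comp_of_iid h₁₂ hid' hφ hφ1,
    integral_abs_sub_comp_of_iid h₁₂ hid' hψ hψ1,
    integral_abs_sub_mul_abs_sub_comp_of_iid₃ h₁₂ h₁₂₃ hid' hid'' hφ hψ hφ1 hψ1,
    integral_abs_sub_mul_abs_sub_comp_of_iid₃ h₁₃ h₁₃₂ hid'' hid' hφ hψ hφ1 hψ1]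
  simp only [Pi.mul_apply]
  ring

end IID

noncomputable def thresholdSign (t x : ℝ) : ℝ := if x < t then 1 else -1

@[fun_prop]
lemma Measurable.thresholdSign {β : Type*} [MeasurableSpace β] {f g : β → ℝ}
    (hf : Measurable f) (hg : Measurable g) : Measurable fun p => thresholdSign (f p) (g p) :=
  Measurable.ite (measurableSet_lt hg hf) measurable_const measurable_const

lemma abs_thresholdSign (t x : ℝ) : |thresholdSign t x| = 1 := by
  unfold thresholdSign; split_ifs <;> simp

lemma abs_thresholdSign_sub_le (t x x' : ℝ) : |thresholdSign t x - thresholdSign t x'| ≤ 2 := by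
  simpa [abs_thresholdSign, one_add_one_eq_two] using
    abs_sub (thresholdSign t x) (thresholdSign t x')

lemma abs_thresholdSign_sub (t x x' : ℝ) :
    |thresholdSign t x - thresholdSign t x'|
      = (Ioc (min x x') (max x x')).indicator (fun _ => 2) t := by
  simp only [thresholdSign, indicator, mem_Ioc, min_lt_iff, le_max_iff]
  split_ifs <;> norm_num <;> grind

lemma integral_abs_thresholdSign_sub {a b x x' : ℝ} (hx : x ∈ Icc a b) (hx' : x' ∈ Icc a b) :
    ∫ t in Ioc a b, |thresholdSign t x - thresholdSign t x'| = 2 * |x - x'| := by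
  have hsub : Ioc (min x x') (max x x') ⊆ Ioc a b :=
    Ioc_subset_Ioc (le_min hx.1 hx'.1) (max_le hx.2 hx'.2)
  simp_rw [abs_thresholdSign_sub]
  rw [integral_indicator measurableSet_Ioc, Measure.restrict_restrict measurableSet_Ioc,
    inter_eq_left.2 hsub, setIntegral_const, Real.volume_real_Ioc_of_le min_le_max,
    max_sub_min_eq_abs, smul_eq_mul, abs_sub_comm, mul_comm]

section Representation

variable {Ω : Type*} [MeasurableSpace Ω] {μ : Measure Ω} [IsFiniteMeasure μ] {a b c d : ℝ}
  {X X' Y Y' : Ω → ℝ}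

lemma integrable_abs_thresholdSign_sub {ν : Measure ℝ} [IsFiniteMeasure ν]
    (hX : Measurable X) (hX' : Measurable X') :
    Integrable (fun p : Ω × ℝ => |thresholdSign p.2 (X p.1) - thresholdSign p.2 (X' p.1)|)
      (μ.prod ν) :=
  .of_bound (by fun_prop) 2 (ae_of_all _ fun p => by simpa using abs_thresholdSign_sub_le _ _ _)

lemma integrable_abs_thresholdSign_sub_mul {ν : Measure (ℝ × ℝ)} [IsFiniteMeasure ν]
    (hX : Measurable X) (hX' : Measurable X') (hY : Measurable Y) (hY' : Measurable Y') :
    Integrable (fun p : Ω × (ℝ × ℝ) =>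
      |thresholdSign p.2.1 (X p.1) - thresholdSign p.2.1 (X' p.1)|
        * |thresholdSign p.2.2 (Y p.1) - thresholdSign p.2.2 (Y' p.1)|) (μ.prod ν) := by
  refine .of_bound (by fun_prop) (2 * 2) (ae_of_all _ fun p => ?_)
  rw [Real.norm_eq_abs, abs_mul, abs_abs, abs_abs]
  exact mul_le_mul (abs_thresholdSign_sub_le _ _ _) (abs_thresholdSign_sub_le _ _ _)
    (abs_nonneg _) zero_le_two

lemma integral_abs_sub_eq_integral_thresholdSign (hX : Measurable X) (hX' : Measurable X')
    (hXab : ∀ᵐ ω ∂μ, X ω ∈ Icc a b) (hX'ab : ∀ᵐ ω ∂μ, X' ω ∈ Icc a b) :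
    ∫ ω, |X ω - X' ω| ∂μ
      = 2⁻¹ * ∫ t in Ioc a b,
          ∫ ω, |thresholdSign t (X ω) - thresholdSign t (X' ω)| ∂μ := by
  rw [← integral_integral_swap (integrable_abs_thresholdSign_sub hX hX'), ← integral_const_mul]
  refine integral_congr_ae ?_
  filter_upwards [hXab, hX'ab] with ω hx hx'
  rw [integral_abs_thresholdSign_sub hx hx']
  ring

lemma integral_abs_sub_mul_abs_sub_eq_integral_thresholdSign (hX : Measurable X)
    (hX' : Measurable X') (hY : Measurable Y) (hY' : Measurable Y')
    (hXab : ∀ᵐ ω ∂μ, X ω ∈ Icc a b) (hX'ab : ∀ᵐ ω ∂μ, X' ω ∈ Icc a b)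
    (hYcd : ∀ᵐ ω ∂μ, Y ω ∈ Icc c d) (hY'cd : ∀ᵐ ω ∂μ, Y' ω ∈ Icc c d) :
    ∫ ω, |X ω - X' ω| * |Y ω - Y' ω| ∂μ
      = 4⁻¹ * ∫ z, ∫ ω, |thresholdSign z.1 (X ω) - thresholdSign z.1 (X' ω)|
          * |thresholdSign z.2 (Y ω) - thresholdSign z.2 (Y' ω)| ∂μ
        ∂(volume.restrict (Ioc a b)).prod (volume.restrict (Ioc c d)) := by
  rw [← integral_integral_swap (integrable_abs_thresholdSign_sub_mul hX hX' hY hY'),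
    ← integral_const_mul]
  refine integral_congr_ae ?_
  filter_upwards [hXab, hX'ab, hYcd, hY'cd] with ω hx hx' hy hy'
  rw [integral_prod_mul (fun t => |thresholdSign t (X ω) - thresholdSign t (X' ω)|)
    (fun s => |thresholdSign s (Y ω) - thresholdSign s (Y' ω)|),
    integral_abs_thresholdSign_sub hx hx', integral_abs_thresholdSign_sub hy hy']
  ring

variable {X'' Y'' : Ω → ℝ}

theorem dCovSq_eq_integral_dCovSq_thresholdSign (hX : Measurable X) (hX' : Measurable X')
    (hX'' : Measurable X'') (hY : Measurable Y) (hY' : Measurable Y') (hY'' : Measurable Y'')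
    (hXab : ∀ᵐ ω ∂μ, X ω ∈ Icc a b) (hX'ab : ∀ᵐ ω ∂μ, X' ω ∈ Icc a b)
    (hX''ab : ∀ᵐ ω ∂μ, X'' ω ∈ Icc a b) (hYcd : ∀ᵐ ω ∂μ, Y ω ∈ Icc c d)
    (hY'cd : ∀ᵐ ω ∂μ, Y' ω ∈ Icc c d) (hY''cd : ∀ᵐ ω ∂μ, Y'' ω ∈ Icc c d) :
    dCovSq μ X X' X'' Y Y' Y''
      = 4⁻¹ * ∫ z, dCovSq μ (fun ω => thresholdSign z.1 (X ω))
          (fun ω => thresholdSign z.1 (X' ω)) (fun ω => thresholdSign z.1 (X'' ω))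
          (fun ω => thresholdSign z.2 (Y ω)) (fun ω => thresholdSign z.2 (Y' ω))
          (fun ω => thresholdSign z.2 (Y'' ω))
        ∂(volume.restrict (Ioc a b)).prod (volume.restrict (Ioc c d)) := by
  set ν := (volume.restrict (Ioc a b)).prod (volume.restrict (Ioc c d)) with hν
  have i₁ := Integrable.integral_prod_right
    (integrable_abs_thresholdSign_sub_mul (μ := μ) (ν := ν) hX hX' hY hY')
  have iX := Integrable.integral_prod_right
    (integrable_abs_thresholdSign_sub (μ := μ) (ν := volume.restrict (Ioc a b)) hX hX')
  have iY := Integrable.integral_prod_right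
    (integrable_abs_thresholdSign_sub (μ := μ) (ν := volume.restrict (Ioc c d)) hY hY')
  have i₂ := iX.mul_prod iY
  have i₃ := Integrable.integral_prod_right
    (integrable_abs_thresholdSign_sub_mul (μ := μ) (ν := ν) hX hX' hY hY'')
  have i₄ := Integrable.integral_prod_right
    (integrable_abs_thresholdSign_sub_mul (μ := μ) (ν := ν) hX hX'' hY hY')
  unfold dCovSq
  rw [integral_sub ?_ i₄, integral_sub ?_ i₃, integral_add i₁ i₂, hν,
    integral_prod_mul (fun t => ∫ ω, |thresholdSign t (X ω) - thresholdSign t (X' ω)| ∂μ)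
      (fun s => ∫ ω, |thresholdSign s (Y ω) - thresholdSign s (Y' ω)| ∂μ),
    integral_abs_sub_mul_abs_sub_eq_integral_thresholdSign hX hX' hY hY' hXab hX'ab hYcd hY'cd,
    integral_abs_sub_mul_abs_sub_eq_integral_thresholdSign hX hX' hY hY'' hXab hX'ab hYcd hY''cd,
    integral_abs_sub_mul_abs_sub_eq_integral_thresholdSign hX hX'' hY hY' hXab hX''ab hYcd hY'cd,
    integral_abs_sub_eq_integral_thresholdSign hX hX' hXab hX'ab,
    integral_abs_sub_eq_integral_thresholdSign hY hY' hYcd hY'cd]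
  · ring
  · exact i₁.add i₂
  · exact (i₁.add i₂).sub i₃

end Representation

lemma dCovSq_thresholdSign_mem_Icc {Ω : Type*} [MeasurableSpace Ω] {μ : Measure Ω}
    [IsProbabilityMeasure μ] {X X' X'' Y Y' Y'' : Ω → ℝ}
    (hindep : iIndepFun
      ![fun ω => (X ω, Y ω), fun ω => (X' ω, Y' ω), fun ω => (X'' ω, Y'' ω)] μ)
    (hid1 : IdentDistrib (fun ω => (X ω, Y ω)) (fun ω => (X' ω, Y' ω)) μ μ)
    (hid2 : IdentDistrib (fun ω => (X ω, Y ω)) (fun ω => (X'' ω, Y'' ω)) μ μ) (t s : ℝ) :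
    dCovSq μ (fun ω => thresholdSign t (X ω)) (fun ω => thresholdSign t (X' ω))
        (fun ω => thresholdSign t (X'' ω)) (fun ω => thresholdSign s (Y ω))
        (fun ω => thresholdSign s (Y' ω)) (fun ω => thresholdSign s (Y'' ω)) ∈ Icc 0 1 := by
  have hφ : Measurable fun p : ℝ × ℝ => thresholdSign t p.1 := by fun_prop
  have hψ : Measurable fun p : ℝ × ℝ => thresholdSign s p.2 := by fun_prop
  rw [dCovSq_comp_eq_covariance_sq (Z := fun ω => (X ω, Y ω)) hindep hid1 hid2 hφ hψ
    (fun _ => abs_thresholdSign _ _) (fun _ => abs_thresholdSign _ _)]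
  exact ⟨sq_nonneg _, covariance_sq_le_one
    (hφ.comp_aemeasurable hid1.aemeasurable_fst).aestronglyMeasurable
    (hψ.comp_aemeasurable hid1.aemeasurable_fst).aestronglyMeasurable
    (ae_of_all _ fun _ => (abs_thresholdSign _ _).le)
    (ae_of_all _ fun _ => (abs_thresholdSign _ _).le)⟩

/-- Corollary: for iid pairs `(X,Y)`, `(X',Y')`, `(X'',Y'')` of real random variables with
`X ∈ [a,b]` and `Y ∈ [c,d]` almost surely, the distance covariance satisfies
`dCov(X,Y) ≤ (1/2)·√((b−a)(d−c))`; equivalently `dCov²(X,Y) ≤ (1/4)·(b−a)(d−c)`, where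
`dCov²(X,Y) = E[|X−X'||Y−Y'|] + E[|X−X'|]E[|Y−Y'|] − E[|X−X'||Y−Y''|] − E[|X−X''||Y−Y'|]`
and `dCov(X,Y)` is its nonnegative square root. -/
theorem dCov_le_of_bounded_real
    {Ω : Type*} [MeasurableSpace Ω] (μ : Measure Ω) [IsProbabilityMeasure μ]
    (a b c d : ℝ) (hab : a ≤ b) (hcd : c ≤ d)
    (X X' X'' : Ω → ℝ) (Y Y' Y'' : Ω → ℝ)
    (hXm : Measurable X) (hX'm : Measurable X') (hX''m : Measurable X'')
    (hYm : Measurable Y) (hY'm : Measurable Y') (hY''m : Measurable Y'')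
    (hindep : iIndepFun
      ![fun ω => (X ω, Y ω), fun ω => (X' ω, Y' ω), fun ω => (X'' ω, Y'' ω)] μ)
    (hid1 : IdentDistrib (fun ω => (X ω, Y ω)) (fun ω => (X' ω, Y' ω)) μ μ)
    (hid2 : IdentDistrib (fun ω => (X ω, Y ω)) (fun ω => (X'' ω, Y'' ω)) μ μ)
    (hXab : ∀ᵐ ω ∂μ, X ω ∈ Set.Icc a b)
    (hX'ab : ∀ᵐ ω ∂μ, X' ω ∈ Set.Icc a b)
    (hX''ab : ∀ᵐ ω ∂μ, X'' ω ∈ Set.Icc a b)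
    (hYcd : ∀ᵐ ω ∂μ, Y ω ∈ Set.Icc c d)
    (hY'cd : ∀ᵐ ω ∂μ, Y' ω ∈ Set.Icc c d)
    (hY''cd : ∀ᵐ ω ∂μ, Y'' ω ∈ Set.Icc c d) :
    Real.sqrt ((∫ ω, |X ω - X' ω| * |Y ω - Y' ω| ∂μ)
          + (∫ ω, |X ω - X' ω| ∂μ) * (∫ ω, |Y ω - Y' ω| ∂μ)
          - (∫ ω, |X ω - X' ω| * |Y ω - Y'' ω| ∂μ)
          - (∫ ω, |X ω - X'' ω| * |Y ω - Y' ω| ∂μ))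
        ≤ (1 / 2) * Real.sqrt ((b - a) * (d - c))
      ∧ (∫ ω, |X ω - X' ω| * |Y ω - Y' ω| ∂μ)
          + (∫ ω, |X ω - X' ω| ∂μ) * (∫ ω, |Y ω - Y' ω| ∂μ)
          - (∫ ω, |X ω - X' ω| * |Y ω - Y'' ω| ∂μ)
          - (∫ ω, |X ω - X'' ω| * |Y ω - Y' ω| ∂μ)
        ≤ (1 / 4) * ((b - a) * (d - c)) := by
  have hsign (z : ℝ × ℝ) := dCovSq_thresholdSign_mem_Icc hindep hid1 hid2 z.1 z.2
  have hsq : dCovSq μ X X' X'' Y Y' Y'' ≤ 1 / 4 * ((b - a) * (d - c)) := by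
    rw [dCovSq_eq_integral_dCovSq_thresholdSign hXm hX'm hX''m hYm hY'm hY''m
      hXab hX'ab hX''ab hYcd hY'cd hY''cd]
    refine (mul_le_mul_of_nonneg_left (integral_mono_of_nonneg (ae_of_all _ fun z => (hsign z).1)
      (integrable_const 1) (ae_of_all _ fun z => (hsign z).2)) (by norm_num)).trans_eq ?_
    simp [Measure.real, ← univ_prod_univ, Measure.prod_prod, ENNReal.toReal_mul, hab, hcd]
  refine ⟨?_, hsq⟩
  calc _ ≤ Real.sqrt (1 / 4 * ((b - a) * (d - c))) := Real.sqrt_le_sqrt hsq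
    _ = 1 / 2 * Real.sqrt ((b - a) * (d - c)) := by
      rw [Real.sqrt_mul (by norm_num), show (1 / 4 : ℝ) = (1 / 2) ^ 2 by norm_num,
        Real.sqrt_sq (by norm_num)]
end
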